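/- arXiv:1407.4994 — 4 statements merged into one kernel-verified Lean document; each statement's English description precedes it below -/
import Mathlib

section
/- There exist C > 0 and N ∈ ℕ such that for every integer m ≥ N and every real number λ satisfying |λ − ν_{m−k}| ≥ a^{−2} |k| · |2m+2 − k| for all integers k with k ≠ 0 and k ≠ 2m+2, one has ∑_{k ∈ ℤ, k ≠ 0, k ≠ 2m+2} |1/(λ − ν_{m−k}) − 1/(ν_m − ν_{m−k})| ≤ C |λ − ν_m| / m. -/
open MeasureTheory Filter Set intervalIntegral

noncomputable section

/-- The complex exponential `e^{2π i n x / a}`. -/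
def e2 (a : ℝ) (n : ℤ) (x : ℝ) : ℂ :=
  Complex.exp (((2 * Real.pi * n * x / a : ℝ) : ℂ) * Complex.I)

/-- The `n`-th Fourier coefficient `c_n = (1/a) ∫₀^a q(x) e^{-2π i n x/a} dx`. -/
def fc (a : ℝ) (q : ℝ → ℝ) (n : ℤ) : ℂ :=
  (1 / (a : ℂ)) * ∫ x in (0:ℝ)..a, (q x : ℂ) * e2 a (-n) x

/-- `ρ(m)`: the maximum of the two uniform norms of `x ↦ ∫₀ˣ q(t) e^{∓2(2m+2)π i t/a} dt`. -/
def rho (a : ℝ) (q : ℝ → ℝ) (m : ℕ) : ℝ :=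
  max (⨆ x : Set.Icc (0:ℝ) a, ‖∫ t in (0:ℝ)..(x : ℝ), (q t : ℂ) * e2 a (-(2*(m:ℤ)+2)) t‖)
      (⨆ x : Set.Icc (0:ℝ) a, ‖∫ t in (0:ℝ)..(x : ℝ), (q t : ℂ) * e2 a (2*(m:ℤ)+2) t‖)

/-- `Q(x) = (1/a) ∫₀ˣ q(t) dt`. -/
def Qf (a : ℝ) (q : ℝ → ℝ) (x : ℝ) : ℝ :=
  (1 / a) * ∫ t in (0:ℝ)..x, q t

/-- `Q₀ = (1/a) ∫₀^a Q(x) dx`. -/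
def Q0 (a : ℝ) (q : ℝ → ℝ) : ℝ :=
  (1 / a) * ∫ x in (0:ℝ)..a, Qf a q x

/-- `G⁺(x,m) = (1/a)∫₀ˣ q(t) e^{-2(2m+2)π i t/a} dt − (c_{2m+2}/a) x`. -/
def Gp (a : ℝ) (q : ℝ → ℝ) (m : ℕ) (x : ℝ) : ℂ :=
  (1 / (a : ℂ)) * (∫ t in (0:ℝ)..x, (q t : ℂ) * e2 a (-(2*(m:ℤ)+2)) t)
    - (fc a q (2*(m:ℤ)+2) / a) * x

/-- `G⁻(x,m) = (1/a)∫₀ˣ q(t) e^{+2(2m+2)π i t/a} dt − (c_{−(2m+2)}/a) x`. -/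
def Gm (a : ℝ) (q : ℝ → ℝ) (m : ℕ) (x : ℝ) : ℂ :=
  (1 / (a : ℂ)) * (∫ t in (0:ℝ)..x, (q t : ℂ) * e2 a (2*(m:ℤ)+2) t)
    - (fc a q (-(2*(m:ℤ)+2)) / a) * x

/-- `G₀⁺(m) = (1/a) ∫₀^a G⁺(x,m) dx`. -/
def Gp0 (a : ℝ) (q : ℝ → ℝ) (m : ℕ) : ℂ :=
  (1 / (a : ℂ)) * ∫ x in (0:ℝ)..a, Gp a q m x

/-- `G₀⁻(m) = (1/a) ∫₀^a G⁻(x,m) dx`. -/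
def Gm0 (a : ℝ) (q : ℝ → ℝ) (m : ℕ) : ℂ :=
  (1 / (a : ℂ)) * ∫ x in (0:ℝ)..a, Gm a q m x

/-- The pairing `(f,g) = (1/a) ∫₀^a f(x) conj(g(x)) dx`. -/
def ip (a : ℝ) (f g : ℝ → ℂ) : ℂ :=
  (1 / (a : ℂ)) * ∫ x in (0:ℝ)..a, f x * (starRingEnd ℂ) (g x)

/-- `ν_j = ((2j+2)π/a)²`. -/
def nuZ (a : ℝ) (j : ℤ) : ℝ :=
  ((2 * (j : ℝ) + 2) * Real.pi / a) ^ 2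

/-- `Ψ` is an eigenfunction of `y'' + (λ − q) y = 0` with the periodic boundary
conditions `y(0) = y(a)`, `y'(0) = y'(a)`: `Ψ` is not identically zero, continuously
differentiable, `Ψ'` is absolutely continuous on `[0,a]` (i.e. it is the integral of
an integrable function `Ψ''`), and the equation holds a.e. on `[0,a]`. -/
def IsEigenfunc (a : ℝ) (q : ℝ → ℝ) (lam : ℝ) (Ψ : ℝ → ℂ) : Prop :=
  (∃ x ∈ Set.Icc (0:ℝ) a, Ψ x ≠ 0) ∧
  ∃ Ψ' Ψ'' : ℝ → ℂ,
    (∀ x, HasDerivAt Ψ (Ψ' x) x) ∧ Continuous Ψ' ∧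
    MeasureTheory.IntegrableOn Ψ'' (Set.Icc 0 a) ∧
    (∀ x ∈ Set.Icc (0:ℝ) a, Ψ' x = Ψ' 0 + ∫ t in (0:ℝ)..x, Ψ'' t) ∧
    (∀ᵐ x ∂(MeasureTheory.volume.restrict (Set.Icc (0:ℝ) a)),
      Ψ'' x + ((lam : ℂ) - (q x : ℂ)) * Ψ x = 0) ∧
    Ψ 0 = Ψ a ∧ Ψ' 0 = Ψ' a

/-- `λ` is a periodic eigenvalue if it has an eigenfunction. -/
def IsPeriodicEV (a : ℝ) (q : ℝ → ℝ) (lam : ℝ) : Prop :=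
  ∃ Ψ : ℝ → ℂ, IsEigenfunc a q lam Ψ

end

/-! Write `u = k` and `v = 2m+2-k`. Then `ν_m - ν_{m-k} = 4π²uv/a²`, so together with the
hypothesis `|λ - ν_{m-k}| ≥ |uv|/a²` each summand
`|λ - ν_m| / (|λ - ν_{m-k}| |ν_m - ν_{m-k}|)` is at most `a⁴|λ - ν_m| / (4π²u²v²)`.
As `u + v = 2m+2`, `1/(u²v²) = (1/u + 1/v)²/(2m+2)² ≤ 2(1/u² + 1/v²)/(2m+2)²`, and both
`∑ 1/u²` and `∑ 1/v²` are at most `∑_{k ∈ ℤ} 1/k² = π²/3`. This gives `C = a⁴/12`, `N = 1`. -/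

open Real

lemma hasSum_one_div_int_sq : HasSum (fun n : ℤ => 1 / (n : ℝ) ^ 2) (π ^ 2 / 3) := by
  have h := HasSum.of_nat_of_neg (f := fun n : ℤ => 1 / (n : ℝ) ^ 2)
    (by simpa using hasSum_zeta_two) (by simpa using hasSum_zeta_two)
  rwa [show π ^ 2 / 6 + π ^ 2 / 6 - 1 / ((0 : ℤ) : ℝ) ^ 2 = π ^ 2 / 3 by norm_num; ring] at h

lemma tsum_le_of_le_add_comp_sub {f : ℤ → ℝ} (hf : Summable f) (hf0 : 0 ≤ f) {p : ℤ → Prop}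
    (n : ℤ) {F : Subtype p → ℝ} (hF0 : 0 ≤ F) {c : ℝ} (hc : 0 ≤ c)
    (hF : ∀ k, F k ≤ c * (f k + f (n - k))) :
    ∑' k, F k ≤ c * (2 * ∑' k, f k) := by
  have hf' : Summable fun k => f (n - k) := (Equiv.subLeft n).summable_iff.mpr hf
  have hs : Summable fun k : Subtype p => c * (f k + f (n - k)) :=
    ((hf.subtype _).add (hf'.subtype _)).mul_left c
  calc ∑' k, F k ≤ ∑' k : Subtype p, c * (f k + f (n - k)) :=
        (hs.of_nonneg_of_le hF0 hF).tsum_le_tsum hF hs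
    _ = c * (∑' k : Subtype p, f k + ∑' k : Subtype p, f (n - k)) := by
        rw [tsum_mul_left]
        exact congrArg _ ((hf.subtype _).tsum_add (hf'.subtype _))
    _ ≤ c * (∑' k, f k + ∑' k, f (n - k)) := by
        gcongr
        · exact hf.tsum_subtype_le f {k | p k} hf0
        · exact hf'.tsum_subtype_le (fun k => f (n - k)) {k | p k} (fun k => hf0 _)
    _ = c * (2 * ∑' k, f k) := by
        rw [show ∑' k, f (n - k) = ∑' k, f k from (Equiv.subLeft n).tsum_eq f]; ring

lemma nuZ_sub_nuZ_sub (a : ℝ) (m k : ℤ) :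
    nuZ a m - nuZ a (m - k) = 4 * π ^ 2 * (k * (2 * m + 2 - k)) / a ^ 2 := by
  unfold nuZ; push_cast; ring

lemma abs_one_div_sub_one_div_le {x y p q : ℝ} (hp : 0 < p) (hq : 0 < q) (hx : p ≤ |x|)
    (hy : q ≤ |y|) : |1 / x - 1 / y| ≤ |x - y| / (p * q) := by
  have hx0 : x ≠ 0 := abs_pos.mp (hp.trans_le hx)
  have hy0 : y ≠ 0 := abs_pos.mp (hq.trans_le hy)
  rw [div_sub_div _ _ hx0 hy0, abs_div, abs_mul, one_mul, mul_one, abs_sub_comm]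
  gcongr

lemma sq_add_div_sq_mul_sq_le (u v : ℝ) :
    (u + v) ^ 2 / (u ^ 2 * v ^ 2) ≤ 2 * (1 / u ^ 2 + 1 / v ^ 2) := by
  rcases eq_or_ne u 0 with rfl | hu
  · rw [zero_pow two_ne_zero, zero_mul, div_zero]; positivity
  rcases eq_or_ne v 0 with rfl | hv
  · rw [zero_pow two_ne_zero, mul_zero, div_zero]; positivity
  calc (u + v) ^ 2 / (u ^ 2 * v ^ 2) = (1 / u + 1 / v) ^ 2 := by field_simp; ring
    _ ≤ 2 * ((1 / u) ^ 2 + (1 / v) ^ 2) := add_sq_le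
    _ = 2 * (1 / u ^ 2 + 1 / v ^ 2) := by ring

lemma abs_one_div_sub_one_div_nuZ_le {a lam : ℝ} (ha : a ≠ 0) {m k : ℤ} (hm : 0 ≤ m)
    (hk₀ : k ≠ 0) (hk : k ≠ 2 * m + 2)
    (hlam : |(k : ℝ)| * |2 * (m : ℝ) + 2 - k| / a ^ 2 ≤ |lam - nuZ a (m - k)|) :
    |1 / (lam - nuZ a (m - k)) - 1 / (nuZ a m - nuZ a (m - k))|
      ≤ a ^ 4 * |lam - nuZ a m| / (2 * π ^ 2 * (2 * m + 2) ^ 2)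
        * (1 / (k : ℝ) ^ 2 + 1 / ((2 * m + 2 - k : ℤ) : ℝ) ^ 2) := by
  have hm' : (0 : ℝ) < 2 * m + 2 := by
    have : (0 : ℝ) ≤ m := by exact_mod_cast hm
    linarith
  have hdist := nuZ_sub_nuZ_sub a m k
  push_cast
  generalize hu : (k : ℝ) = u at *
  generalize hv : 2 * (m : ℝ) + 2 - u = v at *
  have huv : 2 * (m : ℝ) + 2 = u + v := by rw [← hv]; ring
  rw [huv] at hm' ⊢
  have hu0 : u ≠ 0 := by rw [← hu]; exact_mod_cast hk₀
  have hv0 : v ≠ 0 := by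
    rw [← hv, ← hu, sub_ne_zero]; exact_mod_cast hk.symm
  replace hdist : |nuZ a m - nuZ a (m - k)| = 4 * π ^ 2 * (|u| * |v|) / a ^ 2 := by
    rw [hdist, abs_div, abs_mul, abs_of_pos (by positivity : (0 : ℝ) < 4 * π ^ 2), abs_mul,
      abs_of_pos (by positivity : 0 < a ^ 2)]
  calc _ ≤ |lam - nuZ a m| / (|u| * |v| / a ^ 2 * (4 * π ^ 2 * (|u| * |v|) / a ^ 2)) := by
        simpa only [sub_sub_sub_cancel_right] using
          abs_one_div_sub_one_div_le (by positivity) (by positivity) hlam hdist.ge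
    _ = a ^ 4 * |lam - nuZ a m| / (4 * π ^ 2 * (u + v) ^ 2)
          * ((u + v) ^ 2 / (u ^ 2 * v ^ 2)) := by
        rw [← sq_abs u, ← sq_abs v]
        field_simp
    _ ≤ a ^ 4 * |lam - nuZ a m| / (4 * π ^ 2 * (u + v) ^ 2)
          * (2 * (1 / u ^ 2 + 1 / v ^ 2)) := by
        gcongr
        exact sq_add_div_sq_mul_sq_le u v
    _ = _ := by field_simp; ring

/-- there are `C > 0` and `N` such that for every integer `m ≥ N` and
every real `λ` with `|λ − ν_{m−k}| ≥ a⁻²|k||2m+2−k|` for all `k ≠ 0, 2m+2`, one has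
`∑_{k ≠ 0, 2m+2} |1/(λ−ν_{m−k}) − 1/(ν_m−ν_{m−k})| ≤ C|λ−ν_m|/m`. -/
theorem statement2 (a : ℝ) (ha : 0 < a) :
    ∃ C > (0:ℝ), ∃ N : ℕ, ∀ m : ℤ, (N : ℤ) ≤ m → ∀ lam : ℝ,
      (∀ k : ℤ, k ≠ 0 → k ≠ 2*m+2 →
        (|(k : ℝ)| * |2*(m:ℝ)+2 - (k : ℝ)|) / a^2 ≤ |lam - nuZ a (m - k)|) →
      (∑' k : {k : ℤ // k ≠ 0 ∧ k ≠ 2*m+2},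
          |1 / (lam - nuZ a (m - (k : ℤ))) - 1 / (nuZ a m - nuZ a (m - (k : ℤ)))|)
        ≤ C * |lam - nuZ a m| / (m : ℝ) := by
  refine ⟨a ^ 4 / 12, by positivity, 1, fun m hm lam hlam => ?_⟩
  have hm₁ : (1 : ℝ) ≤ m := by exact_mod_cast hm
  calc _ ≤ a ^ 4 * |lam - nuZ a m| / (2 * π ^ 2 * (2 * m + 2) ^ 2)
        * (2 * ∑' k : ℤ, 1 / (k : ℝ) ^ 2) :=
        tsum_le_of_le_add_comp_sub hasSum_one_div_int_sq.summable (fun k => by positivity)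
          (2 * m + 2) (fun k => abs_nonneg _) (by positivity) fun k =>
            abs_one_div_sub_one_div_nuZ_le ha.ne' (by omega) k.2.1 k.2.2 (hlam k k.2.1 k.2.2)
    _ = a ^ 4 / 12 * |lam - nuZ a m| / (m + 1) ^ 2 := by
        rw [hasSum_one_div_int_sq.tsum_eq]
        field_simp
        ring
    _ ≤ a ^ 4 / 12 * |lam - nuZ a m| / m := by
        gcongr
        nlinarith
end

section
/- For every m ∈ ℕ, the series ∑_{m₁ ∈ ℤ, m₁ ≠ 0, m₁ ≠ 2m+2} c_{m₁} c_{2m+2−m₁} / (m₁ (2m+2−m₁)) converges absolutely and equals −(4π²/a) ∫₀^a (Q(x) − Q₀)² e^{−2(2m+2)π i x/a} dx. -/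
open MeasureTheory Filter Set intervalIntegral

/-!
Since `c₀ = 0` forces `∫₀^a q = 0`, the function `Q - Q₀` is continuous on `[0, a]` with equal
values at the endpoints, so it descends to a continuous function on the circle `ℝ / aℤ`. Swapping
the order of integration in `∫₀^a (∫₀ˣ q) e_{-n}` shows that its `n`-th Fourier coefficient `b_n`
is `c_n / (2π i n)`. Parseval's identity, applied to `conj(Q - Q₀) · e_N` and `Q - Q₀`, then gives
the absolutely convergent convolution `∑ₙ b_{N-n} b_n` of these coefficients as the `N`-th
Fourier coefficient of `(Q - Q₀)²`; the factor `(2π i)² = -4π²` yields the claim.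
-/

open Complex ComplexConjugate AddCircle Real

theorem integral_primitive_mul_eq {𝕜 : Type*} [RCLike 𝕜] {g e : ℝ → 𝕜} {b c : ℝ}
    (hbc : b ≤ c) (hg : IntegrableOn g (Ioc b c)) (he : IntegrableOn e (Ioc b c)) :
    ∫ x in b..c, (∫ t in b..x, g t) * e x = ∫ t in b..c, g t * ∫ x in t..c, e x := by
  set μ := volume.restrict (Ioc b c)
  set K : ℝ × ℝ → 𝕜 := {p | p.2 ≤ p.1}.indicator fun p => e p.1 * g p.2
  have hK : Integrable K (μ.prod μ) :=
    (he.mul_prod hg).indicator (measurableSet_le measurable_snd measurable_fst)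
  have hrow : ∀ x ∈ Ioc b c, ∫ t, K (x, t) ∂μ = (∫ t in b..x, g t) * e x := by
    intro x hx
    have hKx : (fun t => K (x, t)) = (Iic x).indicator fun t => e x * g t := by
      ext t; simp [K, Set.indicator_apply]
    rw [hKx, MeasureTheory.integral_indicator measurableSet_Iic,
      Measure.restrict_restrict measurableSet_Iic, inter_comm, Ioc_inter_Iic, min_eq_right hx.2, MeasureTheory.integral_const_mul,
      intervalIntegral.integral_of_le hx.1.le, mul_comm]
  have hcol : ∀ t ∈ Ioc b c, ∫ x, K (x, t) ∂μ = g t * ∫ x in t..c, e x := by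
    intro t ht
    have hKt : (fun x => K (x, t)) = (Ici t).indicator fun x => e x * g t := by
      ext x; simp [K, Set.indicator_apply]
    have hset : Ici t ∩ Ioc b c = Icc t c := by
      ext x; simp only [mem_inter_iff, mem_Ici, mem_Ioc, mem_Icc]
      constructor
      · rintro ⟨htx, -, hxc⟩; exact ⟨htx, hxc⟩
      · rintro ⟨htx, hxc⟩; exact ⟨htx, ht.1.trans_le htx, hxc⟩
    rw [hKt, MeasureTheory.integral_indicator measurableSet_Ici,
      Measure.restrict_restrict measurableSet_Ici, hset, integral_Icc_eq_integral_Ioc, MeasureTheory.integral_mul_const,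
      intervalIntegral.integral_of_le ht.2, mul_comm]
  calc ∫ x in b..c, (∫ t in b..x, g t) * e x = ∫ x, ∫ t, K (x, t) ∂μ ∂μ := by
        rw [intervalIntegral.integral_of_le hbc]
        exact (setIntegral_congr_fun measurableSet_Ioc hrow).symm
    _ = ∫ t, ∫ x, K (x, t) ∂μ ∂μ := integral_integral_swap hK
    _ = ∫ t in b..c, g t * ∫ x in t..c, e x := by
        rw [intervalIntegral.integral_of_le hbc]
        exact setIntegral_congr_fun measurableSet_Ioc hcol

theorem hasSum_fourierCoeff_mul {T : ℝ} [Fact (0 < T)] {F G : AddCircle T → ℂ}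
    (hF : Continuous F) (hG : Continuous G) (N : ℤ) :
    HasSum (fun n => fourierCoeff F (N - n) * fourierCoeff G n) (fourierCoeff (F * G) N) := by
  set H : C(AddCircle T, ℂ) := ⟨fun z => conj (F z) * fourier N z, by fun_prop⟩
  set G' : C(AddCircle T, ℂ) := ⟨G, hG⟩
  have hH : ∀ n, fourierCoeff H n = conj (fourierCoeff F (N - n)) := by
    intro n
    rw [fourierCoeff, fourierCoeff, ← integral_conj]
    congr 1; ext z
    change fourier (-n) z * (conj (F z) * fourier N z) = conj (fourier (-(N - n)) z * F z)
    rw [map_mul, ← fourier_neg, neg_neg, sub_eq_add_neg, fourier_add]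
    ring
  have hinner : inner ℂ (ContinuousMap.toLp 2 haarAddCircle ℂ H)
      (ContinuousMap.toLp 2 haarAddCircle ℂ G') = fourierCoeff (F * G) N := by
    rw [ContinuousMap.inner_toLp, fourierCoeff]
    congr 1; ext z
    simp only [H, G', ContinuousMap.coe_mk, smul_eq_mul, map_mul, conj_conj, Pi.mul_apply,
      fourier_neg]
    ring
  refine hinner ▸ (fourierBasis.hasSum_inner_mul_inner _ _).congr_fun fun n => ?_
  rw [← inner_conj_symm, ← HilbertBasis.repr_apply_apply, ← HilbertBasis.repr_apply_apply,
    fourierBasis_repr, fourierBasis_repr, fourierCoeff_toLp, fourierCoeff_toLp, hH, conj_conj]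
  rfl

theorem e2_eq_fourier (a : ℝ) (n : ℤ) (x : ℝ) : e2 a n x = fourier n (x : AddCircle a) := by
  rw [fourier_coe_apply, e2]
  push_cast
  ring_nf

theorem e2_zero (a : ℝ) (n : ℤ) : e2 a n 0 = 1 := by
  simp [e2]

theorem e2_self (a : ℝ) (n : ℤ) : e2 a n a = 1 := by
  rw [e2_eq_fourier, AddCircle.coe_period, ← QuotientAddGroup.mk_zero, ← e2_eq_fourier, e2_zero]

theorem integral_e2_neg {a : ℝ} (ha : 0 < a) {n : ℤ} (hn : n ≠ 0) (s t : ℝ) :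
    ∫ x in s..t, e2 a (-n) x = a / (-2 * π * I * n) * (e2 a (-n) t - e2 a (-n) s) := by
  simp only [e2_eq_fourier]
  rw [integral_eq_sub_of_hasDerivAt (fun x _ => has_antideriv_at_fourier_neg ⟨ha⟩ hn x)
    ((by fun_prop : Continuous fun x : ℝ => fourier (-n) (x : AddCircle a)).intervalIntegrable _ _)]
  ring

theorem fourierCoeff_eq_integral_e2 {T : ℝ} [Fact (0 < T)] {F : AddCircle T → ℂ} {f : ℝ → ℂ}
    (hF : ∀ x ∈ Icc 0 T, F x = f x) (n : ℤ) :
    fourierCoeff F n = (1 / T) * ∫ x in (0:ℝ)..T, f x * e2 T (-n) x := by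
  rw [fourierCoeff_eq_intervalIntegral F n 0, zero_add, Complex.real_smul]
  push_cast
  congr 1
  refine integral_congr fun x hx => ?_
  rw [uIcc_of_le (Fact.out : 0 < T).le] at hx
  rw [smul_eq_mul, hF x hx, e2_eq_fourier, mul_comm]

section Potential

variable {a : ℝ} {q : ℝ → ℝ}

theorem integral_eq_zero_of_fc_zero (ha : a ≠ 0) (hc0 : fc a q 0 = 0) :
    ∫ x in (0:ℝ)..a, q x = 0 := by
  have hfc0 : fc a q 0 = (1 / (a : ℂ)) * ((∫ x in (0:ℝ)..a, q x : ℝ) : ℂ) := by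
    simp [fc, e2, integral_ofReal]
  rw [hfc0] at hc0
  simpa [ha] using hc0

theorem integral_Qf_mul_e2_neg (ha : 0 < a) (hq : IntegrableOn q (Icc 0 a))
    (h0 : ∫ x in (0:ℝ)..a, q x = 0) {n : ℤ} (hn : n ≠ 0) :
    ∫ x in (0:ℝ)..a, (Qf a q x : ℂ) * e2 a (-n) x = a * fc a q n / (2 * π * I * n) := by
  have ha' : (a : ℂ) ≠ 0 := by exact_mod_cast ha.ne'
  have hqc : IntegrableOn (fun t => (q t : ℂ)) (Ioc 0 a) :=
    (hq.mono_set Ioc_subset_Icc_self).ofReal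
  have hqc' : IntervalIntegrable (fun t => (q t : ℂ)) volume 0 a :=
    (intervalIntegrable_iff_integrableOn_Ioc_of_le ha.le).mpr hqc
  have he : Continuous (e2 a (-n)) := by unfold e2; fun_prop
  have hq0 : ∫ t in (0:ℝ)..a, (q t : ℂ) = 0 := by rw [integral_ofReal, h0]; simp
  have hqe : ∫ t in (0:ℝ)..a, (q t : ℂ) * e2 a (-n) t = a * fc a q n := by
    rw [fc]; field_simp
  calc ∫ x in (0:ℝ)..a, (Qf a q x : ℂ) * e2 a (-n) x
      = (1 / a) * ∫ x in (0:ℝ)..a, (∫ t in (0:ℝ)..x, (q t : ℂ)) * e2 a (-n) x := by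
        rw [← intervalIntegral.integral_const_mul]
        congr 1; ext x
        simp only [Qf, integral_ofReal]
        push_cast; ring
    _ = (1 / a) * ∫ t in (0:ℝ)..a, (q t : ℂ) * ∫ x in t..a, e2 a (-n) x := by
        rw [integral_primitive_mul_eq ha.le hqc he.integrableOn_Ioc]
    _ = (1 / a) * ((a / (-2 * π * I * n)) *
          ∫ t in (0:ℝ)..a, ((q t : ℂ) - (q t : ℂ) * e2 a (-n) t)) := by
        congr 1
        rw [← intervalIntegral.integral_const_mul]
        congr 1; ext t
        rw [integral_e2_neg ha hn, e2_self]
        ring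
    _ = a * fc a q n / (2 * π * I * n) := by
        rw [integral_sub hqc' (hqc'.mul_continuousOn he.continuousOn), hq0, hqe]
        field_simp
        ring

theorem Qf_self_of_integral_eq_zero (h0 : ∫ x in (0:ℝ)..a, q x = 0) : Qf a q a = 0 := by
  simp [Qf, h0]

theorem continuousOn_Qf (ha : 0 ≤ a) (hq : IntegrableOn q (Icc 0 a)) :
    ContinuousOn (Qf a q) (Icc 0 a) := by
  rw [← uIcc_of_le ha] at hq ⊢
  exact continuousOn_const.mul (continuousOn_primitive_interval hq)

theorem integral_Qf_sub_Q0 (ha : 0 < a) (hq : IntegrableOn q (Icc 0 a)) :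
    ∫ x in (0:ℝ)..a, (Qf a q x - Q0 a q) = 0 := by
  have hQ : IntervalIntegrable (Qf a q) volume 0 a :=
    (continuousOn_Qf ha.le hq).intervalIntegrable_of_Icc ha.le
  rw [integral_sub hQ intervalIntegrable_const, intervalIntegral.integral_const, Q0, sub_zero,
    smul_eq_mul]
  field_simp
  ring

end Potential

noncomputable def Qcirc (a : ℝ) [Fact (0 < a)] (q : ℝ → ℝ) : AddCircle a → ℂ :=
  AddCircle.liftIco a 0 fun x => ((Qf a q x - Q0 a q : ℝ) : ℂ)

section Circle

variable {a : ℝ} [Fact (0 < a)] {q : ℝ → ℝ}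

theorem Qcirc_coe (h0 : ∫ x in (0:ℝ)..a, q x = 0) {x : ℝ} (hx : x ∈ Icc 0 a) :
    Qcirc a q x = ((Qf a q x - Q0 a q : ℝ) : ℂ) := by
  rcases eq_or_lt_of_le hx.2 with rfl | hxa
  · rw [AddCircle.coe_period, ← QuotientAddGroup.mk_zero, Qcirc,
      liftIco_coe_apply (by simp [Fact.out]), Qf_self_of_integral_eq_zero h0]
    simp [Qf]
  · exact liftIco_coe_apply (by simpa using ⟨hx.1, hxa⟩)

theorem continuous_Qcirc (hq : IntegrableOn q (Icc 0 a)) (h0 : ∫ x in (0:ℝ)..a, q x = 0) :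
    Continuous (Qcirc a q) := by
  refine liftIco_continuous ?_ ?_
  · rw [zero_add, Qf_self_of_integral_eq_zero h0]
    simp [Qf]
  · rw [zero_add]
    exact continuous_ofReal.comp_continuousOn
      ((continuousOn_Qf (Fact.out : 0 < a).le hq).sub continuousOn_const)

theorem fourierCoeff_Qcirc (hq : IntegrableOn q (Icc 0 a)) (h0 : ∫ x in (0:ℝ)..a, q x = 0)
    (n : ℤ) : fourierCoeff (Qcirc a q) n = fc a q n / (2 * π * I * n) := by
  have ha : 0 < a := Fact.out
  rw [fourierCoeff_eq_integral_e2 (fun x hx => Qcirc_coe h0 hx)]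
  rcases eq_or_ne n 0 with rfl | hn
  -- at `n = 0` the right-hand side is `c₀ / 0 = 0`
  · have hconst : ∀ x, e2 a (-0) x = 1 := fun x => by simp [e2]
    simp only [hconst, mul_one, integral_ofReal, integral_Qf_sub_Q0 ha hq, ofReal_zero, mul_zero,
      Int.cast_zero, div_zero]
  have he : Continuous (e2 a (-n)) := by unfold e2; fun_prop
  have hQe : IntervalIntegrable (fun x => (Qf a q x : ℂ) * e2 a (-n) x) volume 0 a :=
    ((continuous_ofReal.comp_continuousOn (continuousOn_Qf ha.le hq)).mul
      he.continuousOn).intervalIntegrable_of_Icc ha.le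
  have he0 : ∫ x in (0:ℝ)..a, e2 a (-n) x = 0 := by
    rw [integral_e2_neg ha hn, e2_self, e2_zero, sub_self, mul_zero]
  calc (1 / (a : ℂ)) * ∫ x in (0:ℝ)..a, ((Qf a q x - Q0 a q : ℝ) : ℂ) * e2 a (-n) x
      = (1 / a) * ((∫ x in (0:ℝ)..a, (Qf a q x : ℂ) * e2 a (-n) x)
          - Q0 a q * ∫ x in (0:ℝ)..a, e2 a (-n) x) := by
        congr 1
        rw [← intervalIntegral.integral_const_mul,
          ← integral_sub hQe ((he.intervalIntegrable _ _).const_mul _)]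
        congr 1; ext x
        push_cast; ring
    _ = fc a q n / (2 * π * I * n) := by
        have ha' : (a : ℂ) ≠ 0 := ofReal_ne_zero.mpr ha.ne'
        rw [he0, mul_zero, sub_zero, integral_Qf_mul_e2_neg ha hq h0 hn]
        field_simp

end Circle

theorem mul_div_mul_eq_neg_four_pi_sq_mul (x y n m : ℂ) :
    x * y / (n * m) = -(4 * π ^ 2) * (y / (2 * π * I * m) * (x / (2 * π * I * n))) := by
  have hπ : (π : ℂ) ≠ 0 := ofReal_ne_zero.mpr pi_ne_zero
  rw [div_mul_div_comm, show 2 * π * I * m * (2 * π * I * n) = -(4 * π ^ 2) * (n * m) by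
    linear_combination 4 * π ^ 2 * n * m * I_sq, ← mul_div_assoc, mul_comm y x,
    mul_div_mul_left _ _ (by simp [hπ])]

theorem statement9_general (a : ℝ) (ha : 0 < a) (q : ℝ → ℝ)
    (hq : MeasureTheory.IntegrableOn q (Set.Icc 0 a))
    (hc0 : fc a q 0 = 0) :
    ∀ m : ℕ,
      Summable (fun k : {k : ℤ // k ≠ 0 ∧ k ≠ 2*(m:ℤ)+2} =>
        ‖fc a q (k : ℤ) * fc a q (2*(m:ℤ)+2 - (k : ℤ))
          / (((k : ℤ) : ℂ) * ((2*(m:ℤ)+2 - (k : ℤ) : ℤ) : ℂ))‖) ∧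
      (∑' k : {k : ℤ // k ≠ 0 ∧ k ≠ 2*(m:ℤ)+2},
          fc a q (k : ℤ) * fc a q (2*(m:ℤ)+2 - (k : ℤ))
            / (((k : ℤ) : ℂ) * ((2*(m:ℤ)+2 - (k : ℤ) : ℤ) : ℂ)))
        = -(((4 * Real.pi^2 / a : ℝ)) : ℂ)
            * ∫ x in (0:ℝ)..a, (((Qf a q x - Q0 a q : ℝ)) : ℂ)^2
                * e2 a (-(2*(m:ℤ)+2)) x := by
  intro m
  have : Fact (0 < a) := ⟨ha⟩
  set N : ℤ := 2 * (m : ℤ) + 2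
  have h0 := integral_eq_zero_of_fc_zero ha.ne' hc0
  have hQ := continuous_Qcirc hq h0
  have hS := (hasSum_fourierCoeff_mul hQ hQ N).mul_left (-(4 * (π : ℂ) ^ 2))
  simp_rw [fourierCoeff_Qcirc hq h0, ← mul_div_mul_eq_neg_four_pi_sq_mul] at hS
  -- the terms with `k = 0` or `k = N` vanish through division by zero
  have hsupp : Function.support (fun k : ℤ => fc a q k * fc a q (N - k) / (k * (N - k : ℤ)))
      ⊆ {k | k ≠ 0 ∧ k ≠ N} := by
    rintro k hk
    refine ⟨?_, ?_⟩ <;> rintro rfl <;> simp at hk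
  have hS' := (hasSum_subtype_iff_of_support_subset hsupp).mpr hS
  refine ⟨hS'.summable.norm, hS'.tsum_eq.trans ?_⟩
  rw [fourierCoeff_eq_integral_e2 (f := fun x => ((Qf a q x - Q0 a q : ℝ) : ℂ) ^ 2) fun x hx => by
    rw [Pi.mul_apply, Qcirc_coe h0 hx, sq]]
  push_cast
  ring

/-- for every `m`, `∑_{m₁ ≠ 0, 2m+2} c_{m₁} c_{2m+2−m₁}/(m₁(2m+2−m₁))`
converges absolutely and equals `−(4π²/a) ∫₀^a (Q(x)−Q₀)² e^{−2(2m+2)π i x/a} dx`. -/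
theorem statement9 (a : ℝ) (ha : 0 < a) (q : ℝ → ℝ)
    (hq : MeasureTheory.IntegrableOn q (Set.Icc 0 a))
    (hper : ∀ x, q (x + a) = q x)
    (hc0 : fc a q 0 = 0) :
    ∀ m : ℕ,
      Summable (fun k : {k : ℤ // k ≠ 0 ∧ k ≠ 2*(m:ℤ)+2} =>
        ‖fc a q (k : ℤ) * fc a q (2*(m:ℤ)+2 - (k : ℤ))
          / (((k : ℤ) : ℂ) * ((2*(m:ℤ)+2 - (k : ℤ) : ℤ) : ℂ))‖) ∧
      (∑' k : {k : ℤ // k ≠ 0 ∧ k ≠ 2*(m:ℤ)+2},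
          fc a q (k : ℤ) * fc a q (2*(m:ℤ)+2 - (k : ℤ))
            / (((k : ℤ) : ℂ) * ((2*(m:ℤ)+2 - (k : ℤ) : ℤ) : ℂ)))
        = -(((4 * Real.pi^2 / a : ℝ)) : ℂ)
            * ∫ x in (0:ℝ)..a, (((Qf a q x - Q0 a q : ℝ)) : ℂ)^2
                * e2 a (-(2*(m:ℤ)+2)) x :=
  statement9_general a ha q hq hc0
end

section
/- For every m ∈ ℕ, the series ∑_{m₁ ∈ ℤ, m₁ ≠ 2m+2, m₁ ≠ −(2m+2)} c_{m₁} c_{−m₁} / ((2m+2−m₁)(2m+2+m₁)) converges absolutely and equals −(4π²/a) ∫₀^a (G^+(x,m) − G₀^+(m))² e^{2(4m+4)π i x/a} dx. -/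
open MeasureTheory Filter Set intervalIntegral

/-!
With `N = 2m+2`, the function `g = G⁺(·,m) - G₀⁺(m)` is continuous, `a`-periodic, of mean zero,
and is the primitive of `(q(t) e^{-2πiNt/a} - c_N)/a`; exchanging the order of integration
(integration by parts for a merely absolutely continuous function) gives
`ĝ(n) = c_{N+n}/(2πin)` for `n ≠ 0`. Hence the twisted function `h = e^{2πiNx/a} g` has
`ĥ(k) = c_k/(2πi(k-N))`, and `ĥ(-k) ĥ(k) = -c_k c_{-k}/(4π²(N-k)(N+k))`. The polarised Parseval
identity `∑ ĥ(-k) ĥ(k) = (1/a) ∫₀^a h²` on the circle `ℝ/aℤ`, with absolute convergence from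
Cauchy–Schwarz in `ℓ²`, gives both claims, since `h² = g² e^{2πi(2N)x/a}`.
-/

open scoped Real

section Exponential

variable {T : ℝ}

lemma fourier_coe_eq_e2 (n : ℤ) (x : ℝ) : fourier n (x : AddCircle T) = e2 T n x := by
  rw [fourier_coe_apply, e2]
  push_cast
  ring_nf

lemma e2_eq_exp (n : ℤ) (x : ℝ) :
    e2 T n x = Complex.exp (2 * π * Complex.I * n / T * x) := by
  rw [e2]
  push_cast
  ring_nf

lemma continuous_e2 (n : ℤ) : Continuous (e2 T n) := by
  unfold e2
  fun_prop

lemma e2_mul_e2 (m n : ℤ) (x : ℝ) : e2 T m x * e2 T n x = e2 T (m + n) x := by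
  simp only [e2_eq_exp, ← Complex.exp_add]
  push_cast
  ring_nf

lemma e2_zero_s10 (x : ℝ) : e2 T 0 x = 1 := by
  simp [e2]

lemma e2_apply_zero (n : ℤ) : e2 T n 0 = 1 := by
  simp [e2]

lemma e2_periodic (n : ℤ) : Function.Periodic (e2 T n) T := by
  intro x
  simp only [← fourier_coe_eq_e2, AddCircle.coe_add_period]

lemma e2_apply_period (n : ℤ) : e2 T n T = 1 := by
  simpa [e2_apply_zero] using e2_periodic (T := T) n 0

lemma integral_e2 (hT : T ≠ 0) {n : ℤ} (hn : n ≠ 0) (s t : ℝ) :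
    ∫ x in s..t, e2 T n x = T / (2 * π * Complex.I * n) * (e2 T n t - e2 T n s) := by
  have hc : (2 * π * Complex.I * n / T : ℂ) ≠ 0 := by simp [hT, hn, Real.pi_ne_zero]
  simp only [e2_eq_exp, integral_exp_mul_complex hc]
  field_simp

lemma integral_e2_period (hT : T ≠ 0) {n : ℤ} (hn : n ≠ 0) :
    ∫ x in (0 : ℝ)..T, e2 T n x = 0 := by
  rw [integral_e2 hT hn, e2_apply_period, e2_apply_zero, sub_self, mul_zero]

end Exponential

lemma HilbertBasis.summable_norm_inner_mul_inner {ι E : Type*} [NormedAddCommGroup E]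
    [InnerProductSpace ℂ E] (b : HilbertBasis ι ℂ E) (x y : E) :
    Summable fun i => ‖inner ℂ x (b i) * inner ℂ (b i) y‖ := by
  simp only [norm_mul, norm_inner_symm x, ← b.repr_apply_apply]
  exact lp.summable_mul (p := 2) (q := 2) (by rw [Real.holderConjugate_iff]; norm_num)
    (b.repr x) (b.repr y)

namespace AddCircle

variable {T : ℝ}

lemma continuous_lift {h : ℝ → ℂ} (hh : Function.Periodic h T) (hc : Continuous h) :
    Continuous hh.lift :=
  continuous_quot_lift _ hc

variable [Fact (0 < T)]

lemma fourierCoeff_star (f : AddCircle T → ℂ) (n : ℤ) :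
    fourierCoeff (star f) n = star (fourierCoeff f (-n)) := by
  simp only [fourierCoeff, smul_eq_mul, Pi.star_apply, neg_neg, fourier_neg, Complex.star_def]
  rw [← integral_conj]
  simp only [map_mul]

lemma inner_toLp_star_fourierBasis {f : AddCircle T → ℂ} (hf : MemLp f 2 haarAddCircle)
    (n : ℤ) :
    inner ℂ (hf.star.toLp (star f)) (fourierBasis n) = fourierCoeff f (-n) := by
  rw [← inner_conj_symm, ← fourierBasis.repr_apply_apply, fourierBasis_repr,
    fourierCoeff_congr_ae hf.star.coeFn_toLp, fourierCoeff_star]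
  simp

lemma inner_fourierBasis_toLp {f : AddCircle T → ℂ} (hf : MemLp f 2 haarAddCircle) (n : ℤ) :
    inner ℂ (fourierBasis n) (hf.toLp f) = fourierCoeff f n := by
  rw [← fourierBasis.repr_apply_apply, fourierBasis_repr, fourierCoeff_congr_ae hf.coeFn_toLp]

lemma hasSum_fourierCoeff_neg_mul_fourierCoeff {f g : AddCircle T → ℂ}
    (hf : MemLp f 2 haarAddCircle) (hg : MemLp g 2 haarAddCircle) :
    HasSum (fun n => fourierCoeff f (-n) * fourierCoeff g n)
      (∫ t, f t * g t ∂haarAddCircle) := by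
  have h := fourierBasis.hasSum_inner_mul_inner (hf.star.toLp (star f)) (hg.toLp g)
  simp only [inner_toLp_star_fourierBasis hf, inner_fourierBasis_toLp hg, L2.inner_def] at h
  rwa [MeasureTheory.integral_congr_ae (g := fun t => f t * g t)] at h
  filter_upwards [hf.star.coeFn_toLp, hg.coeFn_toLp] with t hft hgt
  simp [hft, hgt, mul_comm]

lemma summable_norm_fourierCoeff_neg_mul_fourierCoeff {f g : AddCircle T → ℂ}
    (hf : MemLp f 2 haarAddCircle) (hg : MemLp g 2 haarAddCircle) :
    Summable fun n => ‖fourierCoeff f (-n) * fourierCoeff g n‖ := by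
  simpa only [inner_toLp_star_fourierBasis hf, inner_fourierBasis_toLp hg] using
    fourierBasis.summable_norm_inner_mul_inner (hf.star.toLp (star f)) (hg.toLp g)

lemma fourierCoeff_lift {h : ℝ → ℂ} (hh : Function.Periodic h T) (n : ℤ) :
    fourierCoeff hh.lift n = (1 / T : ℂ) * ∫ x in (0 : ℝ)..T, e2 T (-n) x * h x := by
  rw [fourierCoeff_eq_intervalIntegral _ n 0, zero_add, Complex.real_smul]
  simp only [smul_eq_mul, Function.Periodic.lift_coe, fourier_coe_eq_e2]
  push_cast
  rfl

lemma integral_lift_mul_lift {f g : ℝ → ℂ} (hf : Function.Periodic f T)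
    (hg : Function.Periodic g T) :
    ∫ t, hf.lift t * hg.lift t ∂haarAddCircle
      = (1 / T : ℂ) * ∫ x in (0 : ℝ)..T, f x * g x := by
  rw [integral_haarAddCircle, ← AddCircle.intervalIntegral_preimage T 0, zero_add,
    Complex.real_smul]
  simp only [Function.Periodic.lift_coe]
  push_cast
  ring

lemma memLp_lift {h : ℝ → ℂ} (hh : Function.Periodic h T) (hc : Continuous h) :
    MemLp hh.lift 2 haarAddCircle :=
  ((continuous_lift hh hc).memLp_top_of_hasCompactSupport
    (HasCompactSupport.of_compactSpace _) _).mono_exponent le_top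

end AddCircle

lemma integral_primitive_mul {a b : ℝ} (hab : a ≤ b) {f ψ : ℝ → ℂ}
    (hf : IntervalIntegrable f volume a b) (hψ : Continuous ψ) :
    ∫ x in a..b, (∫ t in a..x, f t) * ψ x = ∫ t in a..b, f t * ∫ x in t..b, ψ x := by
  set μ := volume.restrict (Ioc a b)
  set K : ℝ → ℝ → ℂ := fun x t => (Iic x).indicator (fun t => ψ x * f t) t
  have hK : Integrable (Function.uncurry K) (μ.prod μ) := by
    have hKS : Function.uncurry K
        = {p : ℝ × ℝ | p.2 ≤ p.1}.indicator (fun p => ψ p.1 * f p.2) := by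
      ext ⟨x, t⟩; simp [K, Set.indicator_apply]
    rw [hKS]
    exact (hψ.integrableOn_Ioc.mul_prod
      ((intervalIntegrable_iff_integrableOn_Ioc_of_le hab).mp hf)).indicator
        (measurableSet_le measurable_snd measurable_fst)
  have hx : ∀ x ∈ Ioc a b, ∫ t, K x t ∂μ = (∫ t in a..x, f t) * ψ x := by
    intro x hx
    rw [MeasureTheory.integral_indicator measurableSet_Iic,
      Measure.restrict_restrict measurableSet_Iic, Iic_inter_Ioc_of_le hx.2,
      MeasureTheory.integral_const_mul, intervalIntegral.integral_of_le hx.1.le, mul_comm]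
  have ht : ∀ t ∈ Ioc a b, ∫ x, K x t ∂μ = f t * ∫ x in t..b, ψ x := by
    intro t ht
    have hK' : (fun x => K x t) = (Ici t).indicator (fun x => ψ x * f t) := by
      ext x; simp [K, Set.indicator_apply]
    have hIci : Ici t ∩ Ioc a b = Icc t b :=
      ext fun x => ⟨fun h => ⟨h.1, h.2.2⟩, fun h => ⟨h.1, ht.1.trans_le h.1, h.2⟩⟩
    rw [hK', MeasureTheory.integral_indicator measurableSet_Ici,
      Measure.restrict_restrict measurableSet_Ici, hIci, MeasureTheory.integral_mul_const,
      integral_Icc_eq_integral_Ioc, intervalIntegral.integral_of_le ht.2, mul_comm]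
  rw [intervalIntegral.integral_of_le hab, intervalIntegral.integral_of_le hab,
    ← setIntegral_congr_fun measurableSet_Ioc hx, ← setIntegral_congr_fun measurableSet_Ioc ht]
  exact integral_integral_swap hK

lemma integral_e2_mul_primitive_sub {T : ℝ} (hT : 0 < T) {f : ℝ → ℂ}
    (hf : IntervalIntegrable f volume 0 T) (hf0 : ∫ t in (0 : ℝ)..T, f t = 0) {n : ℤ}
    (hn : n ≠ 0) (C : ℂ) :
    ∫ x in (0 : ℝ)..T, e2 T n x * ((∫ t in (0 : ℝ)..x, f t) - C)
      = -(T / (2 * π * Complex.I * n)) * ∫ t in (0 : ℝ)..T, e2 T n t * f t := by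
  have hF : IntervalIntegrable (fun x => (∫ t in (0 : ℝ)..x, f t) * e2 T n x) volume 0 T :=
    ((continuousOn_primitive_interval' hf left_mem_uIcc).mul
      (continuous_e2 n).continuousOn).intervalIntegrable
  have he : IntervalIntegrable (fun x => C * e2 T n x) volume 0 T :=
    (continuous_const.mul (continuous_e2 n)).intervalIntegrable 0 T
  have hfe : IntervalIntegrable (fun t => f t * e2 T n t) volume 0 T :=
    hf.mul_continuousOn (continuous_e2 n).continuousOn
  have hinner : ∀ t, ∫ x in t..T, e2 T n x = T / (2 * π * Complex.I * n) * (1 - e2 T n t) :=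
    fun t => by rw [integral_e2 hT.ne' hn, e2_apply_period]
  calc ∫ x in (0 : ℝ)..T, e2 T n x * ((∫ t in (0 : ℝ)..x, f t) - C)
      = (∫ x in (0 : ℝ)..T, (∫ t in (0 : ℝ)..x, f t) * e2 T n x)
          - ∫ x in (0 : ℝ)..T, C * e2 T n x := by
        rw [← integral_sub hF he]
        congr 1; ext x; ring
    _ = ∫ t in (0 : ℝ)..T, f t * (T / (2 * π * Complex.I * n) * (1 - e2 T n t)) := by
        rw [integral_primitive_mul hT.le hf (continuous_e2 n), intervalIntegral.integral_const_mul,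
          integral_e2_period hT.ne' hn, mul_zero, sub_zero]
        simp only [hinner]
    _ = T / (2 * π * Complex.I * n)
          * ((∫ t in (0 : ℝ)..T, f t) - ∫ t in (0 : ℝ)..T, f t * e2 T n t) := by
        rw [← integral_sub hf hfe, ← intervalIntegral.integral_const_mul]
        congr 1; ext t; ring
    _ = _ := by
        rw [hf0]
        simp only [mul_comm (e2 T n _)]
        ring

section Gp

variable {a : ℝ} {q : ℝ → ℝ}

lemma intervalIntegrable_ofReal_of_periodic (ha : 0 < a) (hq : IntegrableOn q (Icc 0 a))
    (hper : Function.Periodic q a) (s t : ℝ) :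
    IntervalIntegrable (fun x => (q x : ℂ)) volume s t :=
  Function.Periodic.intervalIntegrable₀ (fun x => by simp only [hper x]) ha.ne'
    ((intervalIntegrable_iff_integrableOn_Ioc_of_le (f := fun x => (q x : ℂ)) ha.le).mpr
      (hq.mono_set Ioc_subset_Icc_self).ofReal) s t

lemma intervalIntegrable_ofReal_mul_e2
    (hq : ∀ s t, IntervalIntegrable (fun x => (q x : ℂ)) volume s t) (n : ℤ) (s t : ℝ) :
    IntervalIntegrable (fun x => (q x : ℂ) * e2 a n x) volume s t :=
  (hq s t).mul_continuousOn (continuous_e2 n).continuousOn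

lemma integral_ofReal_mul_e2_sub_fc (ha : a ≠ 0)
    (hq : IntervalIntegrable (fun x => (q x : ℂ)) volume 0 a) (n : ℤ) :
    ∫ t in (0 : ℝ)..a, ((q t : ℂ) * e2 a (-n) t - fc a q n) = 0 := by
  rw [integral_sub (hq.mul_continuousOn (continuous_e2 _).continuousOn) intervalIntegrable_const,
    intervalIntegral.integral_const, fc]
  simp [ha]

lemma Gp_eq_primitive (hq : ∀ s t, IntervalIntegrable (fun x => (q x : ℂ)) volume s t)
    (m : ℕ) (x : ℝ) :
    Gp a q m x = (1 / a : ℂ) *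
      ∫ t in (0 : ℝ)..x,
        ((q t : ℂ) * e2 a (-(2 * (m : ℤ) + 2)) t - fc a q (2 * (m : ℤ) + 2)) := by
  rw [integral_sub (intervalIntegrable_ofReal_mul_e2 hq _ 0 x) intervalIntegrable_const,
    intervalIntegral.integral_const, Gp]
  simp only [one_div, neg_add_rev, Int.reduceNeg, sub_zero, Complex.real_smul]
  ring

lemma continuous_Gp (hq : ∀ s t, IntervalIntegrable (fun x => (q x : ℂ)) volume s t) (m : ℕ) :
    Continuous (Gp a q m) :=
  (continuous_const.mul (continuous_primitive (intervalIntegrable_ofReal_mul_e2 hq _) 0)).sub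
    (continuous_const.mul Complex.continuous_ofReal)

lemma Gp_periodic (ha : a ≠ 0)
    (hq : ∀ s t, IntervalIntegrable (fun x => (q x : ℂ)) volume s t)
    (hper : Function.Periodic q a) (m : ℕ) : Function.Periodic (Gp a q m) a := by
  intro x
  have hf : Function.Periodic
      (fun t => (q t : ℂ) * e2 a (-(2 * (m : ℤ) + 2)) t - fc a q (2 * (m : ℤ) + 2)) a :=
    fun t => by simp only [hper t, e2_periodic _ t]
  rw [Gp_eq_primitive hq, Gp_eq_primitive hq, hf.intervalIntegral_add_eq_add 0 x
    (fun s t => (intervalIntegrable_ofReal_mul_e2 hq _ s t).sub intervalIntegrable_const),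
    zero_add, integral_ofReal_mul_e2_sub_fc ha (hq 0 a), add_zero]

lemma integral_ofReal_mul_e2_eq_fc (ha : a ≠ 0) (n : ℤ) :
    ∫ t in (0 : ℝ)..a, (q t : ℂ) * e2 a (-n) t = a * fc a q n := by
  rw [fc, ← mul_assoc, mul_one_div_cancel (Complex.ofReal_ne_zero.mpr ha), one_mul]

lemma integral_e2_mul_ofReal_mul_e2_sub_fc (ha : a ≠ 0)
    (hq : IntervalIntegrable (fun x => (q x : ℂ)) volume 0 a) (N : ℤ) {n : ℤ} (hn : n ≠ 0) :
    ∫ t in (0 : ℝ)..a, e2 a (-n) t * ((q t : ℂ) * e2 a (-N) t - fc a q N)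
      = a * fc a q (N + n) := by
  have he : ∀ t, e2 a (-n) t * ((q t : ℂ) * e2 a (-N) t - fc a q N)
      = (q t : ℂ) * e2 a (-(N + n)) t - fc a q N * e2 a (-n) t := fun t => by
    rw [neg_add, ← e2_mul_e2]
    ring
  rw [integral_congr fun t _ => he t,
    integral_sub (hq.mul_continuousOn (continuous_e2 _).continuousOn)
      (((continuous_e2 _).intervalIntegrable 0 a).const_mul _),
    intervalIntegral.integral_const_mul, integral_e2_period ha (neg_ne_zero.mpr hn),
    mul_zero, sub_zero, integral_ofReal_mul_e2_eq_fc ha]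

lemma integral_e2_mul_Gp_sub_Gp0 (ha : 0 < a)
    (hq : ∀ s t, IntervalIntegrable (fun x => (q x : ℂ)) volume s t) (m : ℕ) (n : ℤ) :
    (1 / a : ℂ) * ∫ x in (0 : ℝ)..a, e2 a (-n) x * (Gp a q m x - Gp0 a q m)
      = fc a q (2 * (m : ℤ) + 2 + n) / (2 * π * Complex.I * n) := by
  have haC : (a : ℂ) ≠ 0 := Complex.ofReal_ne_zero.mpr ha.ne'
  rcases eq_or_ne n 0 with rfl | hn
  -- At `n = 0` the right side is the junk value `_ / 0 = 0`; the left vanishes as `Gp0` is the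
  -- mean of `Gp`.
  · rw [integral_congr (g := fun x => Gp a q m x - Gp0 a q m) fun x _ => by simp [e2_zero_s10],
      integral_sub ((continuous_Gp hq m).intervalIntegrable 0 a) intervalIntegrable_const,
      intervalIntegral.integral_const, Gp0]
    simp [haC]
  set N : ℤ := 2 * (m : ℤ) + 2
  set f : ℝ → ℂ := fun t => (q t : ℂ) * e2 a (-N) t - fc a q N
  have hf : ∀ s t, IntervalIntegrable f volume s t := fun s t =>
    (intervalIntegrable_ofReal_mul_e2 hq _ s t).sub intervalIntegrable_const
  have hG : ∀ x, Gp a q m x - Gp0 a q m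
      = (1 / a : ℂ) * ((∫ t in (0 : ℝ)..x, f t) - a * Gp0 a q m) := by
    intro x
    rw [Gp_eq_primitive hq]
    field_simp
    rfl
  have hfe : ∫ t in (0 : ℝ)..a, e2 a (-n) t * f t = a * fc a q (N + n) :=
    integral_e2_mul_ofReal_mul_e2_sub_fc ha.ne' (hq 0 a) N hn
  simp only [hG, mul_left_comm (e2 a (-n) _), intervalIntegral.integral_const_mul,
    integral_e2_mul_primitive_sub ha (hf 0 a) (integral_ofReal_mul_e2_sub_fc ha.ne' (hq 0 a) N)
      (neg_ne_zero.mpr hn), hfe]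
  push_cast
  field_simp

end Gp

noncomputable def twistedGp (a : ℝ) (q : ℝ → ℝ) (m : ℕ) (x : ℝ) : ℂ :=
  e2 a (2 * (m : ℤ) + 2) x * (Gp a q m x - Gp0 a q m)

section twistedGp

variable {a : ℝ} {q : ℝ → ℝ}

lemma twistedGp_periodic (ha : a ≠ 0)
    (hq : ∀ s t, IntervalIntegrable (fun x => (q x : ℂ)) volume s t)
    (hper : Function.Periodic q a) (m : ℕ) : Function.Periodic (twistedGp a q m) a :=
  fun x => by rw [twistedGp, twistedGp, e2_periodic _ x, Gp_periodic ha hq hper m x]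

lemma continuous_twistedGp (hq : ∀ s t, IntervalIntegrable (fun x => (q x : ℂ)) volume s t)
    (m : ℕ) : Continuous (twistedGp a q m) :=
  (continuous_e2 _).mul ((continuous_Gp hq m).sub continuous_const)

lemma twistedGp_mul_self (m : ℕ) (x : ℝ) :
    twistedGp a q m x * twistedGp a q m x
      = (Gp a q m x - Gp0 a q m) ^ 2 * e2 a (4 * (m : ℤ) + 4) x := by
  rw [twistedGp, mul_mul_mul_comm, e2_mul_e2]
  ring_nf

variable [Fact (0 < a)] {m : ℕ}

lemma fourierCoeff_lift_twistedGp (hH : Function.Periodic (twistedGp a q m) a)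
    (hq : ∀ s t, IntervalIntegrable (fun x => (q x : ℂ)) volume s t) (k : ℤ) :
    fourierCoeff hH.lift k
      = fc a q k / (2 * π * Complex.I * (k - (2 * (m : ℤ) + 2) : ℤ)) := by
  have h := integral_e2_mul_Gp_sub_Gp0 (Fact.out : 0 < a) hq m (k - (2 * (m : ℤ) + 2))
  rw [add_sub_cancel] at h
  rw [AddCircle.fourierCoeff_lift, ← h]
  congr 2
  ext x
  rw [twistedGp, ← mul_assoc, e2_mul_e2]
  ring_nf

lemma integral_lift_twistedGp_mul_self (hH : Function.Periodic (twistedGp a q m) a) :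
    ∫ t, hH.lift t * hH.lift t ∂AddCircle.haarAddCircle
      = (1 / a : ℂ)
          * ∫ x in (0 : ℝ)..a, (Gp a q m x - Gp0 a q m) ^ 2 * e2 a (4 * (m : ℤ) + 4) x := by
  simp only [AddCircle.integral_lift_mul_lift, twistedGp_mul_self]

end twistedGp

lemma mul_div_sub_mul_add_eq (x y : ℂ) (N k : ℤ) :
    x * y / (((N - k : ℤ) : ℂ) * ((N + k : ℤ) : ℂ))
      = -(4 * π ^ 2 : ℂ) * (y / (2 * π * Complex.I * ((-k - N : ℤ) : ℂ))
          * (x / (2 * π * Complex.I * ((k - N : ℤ) : ℂ)))) := by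
  have hD :
      2 * π * Complex.I * ((-k - N : ℤ) : ℂ) * (2 * π * Complex.I * ((k - N : ℤ) : ℂ))
      = -(4 * π ^ 2 : ℂ) * (((N - k : ℤ) : ℂ) * ((N + k : ℤ) : ℂ)) := by
    push_cast
    linear_combination (4 * π ^ 2 * (-(k : ℂ) - N) * ((k : ℂ) - N)) * Complex.I_sq
  have hπ : (4 * π ^ 2 : ℂ) ≠ 0 := by simp [Real.pi_ne_zero]
  rw [div_mul_div_comm, hD, mul_div_assoc', mul_comm y, neg_mul, neg_mul, neg_div_neg_eq,
    mul_div_mul_left _ _ hπ]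

theorem statement10_general (a : ℝ) (ha : 0 < a) (q : ℝ → ℝ)
    (hq : MeasureTheory.IntegrableOn q (Set.Icc 0 a))
    (hper : ∀ x, q (x + a) = q x) :
    ∀ m : ℕ,
      Summable (fun k : {k : ℤ // k ≠ 2*(m:ℤ)+2 ∧ k ≠ -(2*(m:ℤ)+2)} =>
        ‖fc a q (k : ℤ) * fc a q (-(k : ℤ))
          / (((2*(m:ℤ)+2 - (k : ℤ) : ℤ) : ℂ) * ((2*(m:ℤ)+2 + (k : ℤ) : ℤ) : ℂ))‖) ∧
      (∑' k : {k : ℤ // k ≠ 2*(m:ℤ)+2 ∧ k ≠ -(2*(m:ℤ)+2)},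
          fc a q (k : ℤ) * fc a q (-(k : ℤ))
            / (((2*(m:ℤ)+2 - (k : ℤ) : ℤ) : ℂ) * ((2*(m:ℤ)+2 + (k : ℤ) : ℤ) : ℂ)))
        = -(((4 * Real.pi^2 / a : ℝ)) : ℂ)
            * ∫ x in (0:ℝ)..a, (Gp a q m x - Gp0 a q m)^2 * e2 a (4*(m:ℤ)+4) x := by
  intro m
  have : Fact (0 < a) := ⟨ha⟩
  have hqi := intervalIntegrable_ofReal_of_periodic ha hq hper
  have hH := twistedGp_periodic ha.ne' hqi hper m
  have hL2 := AddCircle.memLp_lift hH (continuous_twistedGp hqi m)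
  set N : ℤ := 2 * (m : ℤ) + 2
  set c : ℤ → ℂ :=
    fun k => fc a q k * fc a q (-k) / (((N - k : ℤ) : ℂ) * ((N + k : ℤ) : ℂ))
  have hc : ∀ k,
      c k = -(4 * π ^ 2 : ℂ) * (fourierCoeff hH.lift (-k) * fourierCoeff hH.lift k) :=
    fun k => by
      rw [fourierCoeff_lift_twistedGp hH hqi, fourierCoeff_lift_twistedGp hH hqi]
      exact mul_div_sub_mul_add_eq _ _ N k
  -- The excluded indices `k = ±N` carry the junk summand `_ / 0 = 0`.
  have hsupp : Function.support c ⊆ {k | k ≠ N ∧ k ≠ -N} := fun k hk =>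
    ⟨by rintro rfl; simp [c] at hk, by rintro rfl; simp [c] at hk⟩
  have hsum :
      HasSum c (-(4 * π ^ 2 : ℂ) * ∫ t, hH.lift t * hH.lift t ∂AddCircle.haarAddCircle) := by
    rw [funext hc]
    exact (AddCircle.hasSum_fourierCoeff_neg_mul_fourierCoeff hL2 hL2).mul_left _
  have hnorm : Summable fun k => ‖c k‖ :=
    ((AddCircle.summable_norm_fourierCoeff_neg_mul_fourierCoeff hL2 hL2).mul_left
      ‖-(4 * π ^ 2 : ℂ)‖).congr fun k => by rw [hc, norm_mul (-(4 * π ^ 2 : ℂ))]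
  refine ⟨hnorm.subtype _, (tsum_subtype_eq_of_support_subset hsupp).trans
    (hsum.tsum_eq.trans ?_)⟩
  rw [integral_lift_twistedGp_mul_self]
  push_cast
  ring

/-- for every `m`, `∑_{m₁ ≠ ±(2m+2)} c_{m₁} c_{−m₁}/((2m+2−m₁)(2m+2+m₁))`
converges absolutely and equals `−(4π²/a) ∫₀^a (G⁺(x,m)−G₀⁺(m))² e^{2(4m+4)π i x/a} dx`. -/
theorem statement10 (a : ℝ) (ha : 0 < a) (q : ℝ → ℝ)
    (hq : MeasureTheory.IntegrableOn q (Set.Icc 0 a))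
    (hper : ∀ x, q (x + a) = q x)
    (hc0 : fc a q 0 = 0) :
    ∀ m : ℕ,
      Summable (fun k : {k : ℤ // k ≠ 2*(m:ℤ)+2 ∧ k ≠ -(2*(m:ℤ)+2)} =>
        ‖fc a q (k : ℤ) * fc a q (-(k : ℤ))
          / (((2*(m:ℤ)+2 - (k : ℤ) : ℤ) : ℂ) * ((2*(m:ℤ)+2 + (k : ℤ) : ℤ) : ℂ))‖) ∧
      (∑' k : {k : ℤ // k ≠ 2*(m:ℤ)+2 ∧ k ≠ -(2*(m:ℤ)+2)},
          fc a q (k : ℤ) * fc a q (-(k : ℤ))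
            / (((2*(m:ℤ)+2 - (k : ℤ) : ℤ) : ℂ) * ((2*(m:ℤ)+2 + (k : ℤ) : ℤ) : ℂ)))
        = -(((4 * Real.pi^2 / a : ℝ)) : ℂ)
            * ∫ x in (0:ℝ)..a, (Gp a q m x - Gp0 a q m)^2 * e2 a (4*(m:ℤ)+4) x :=
  statement10_general a ha q hq hper
end

section
/- There exists a constant C > 0 (depending only on q and a) such that for every integer m ≥ 1, |∫₀^a (G^+(x,m) − G₀^+(m))² e^{2(4m+4)π i x/a} dx| ≤ C ρ(m)/m. -/
open MeasureTheory Filter Set intervalIntegral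

/-- Fubini-based integration by parts for primitives. -/
lemma ibp_aux {b : ℝ} (hb : 0 ≤ b) {f h : ℝ → ℂ}
    (hf : IntervalIntegrable f volume 0 b) (hh : IntervalIntegrable h volume 0 b) :
    ∫ x in (0:ℝ)..b, (∫ t in (0:ℝ)..x, f t) * h x
      = (∫ t in (0:ℝ)..b, f t) * (∫ x in (0:ℝ)..b, h x)
        - ∫ t in (0:ℝ)..b, f t * ∫ x in (0:ℝ)..t, h x := by
  have hf' : IntegrableOn f (Ioc 0 b) := by
    simpa [intervalIntegrable_iff, uIoc_of_le hb] using hf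
  have hh' : IntegrableOn h (Ioc 0 b) := by
    simpa [intervalIntegrable_iff, uIoc_of_le hb] using hh
  set μ := volume.restrict (Ioc (0:ℝ) b) with hμ
  have hS : MeasurableSet {p : ℝ × ℝ | p.2 ≤ p.1} :=
    measurableSet_le measurable_snd measurable_fst
  -- F x t := indicator of t ≤ x, times f t * h x  (outer variable x first)
  have hint : Integrable (fun p : ℝ × ℝ => ({p : ℝ × ℝ | p.2 ≤ p.1}).indicator
      (fun p => h p.1 * f p.2) p) (μ.prod μ) :=
    (Integrable.mul_prod hh' hf').indicator hS
  have swap :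
      ∫ x, ∫ t, ({p : ℝ × ℝ | p.2 ≤ p.1}).indicator (fun p => h p.1 * f p.2) (x, t) ∂μ ∂μ
        = ∫ t, ∫ x, ({p : ℝ × ℝ | p.2 ≤ p.1}).indicator (fun p => h p.1 * f p.2) (x, t) ∂μ ∂μ :=
    MeasureTheory.integral_integral_swap (by exact hint)
  -- identify LHS
  have hL : ∫ x in (0:ℝ)..b, (∫ t in (0:ℝ)..x, f t) * h x
      = ∫ x, ∫ t, ({p : ℝ × ℝ | p.2 ≤ p.1}).indicator (fun p => h p.1 * f p.2) (x, t) ∂μ ∂μ := by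
    rw [intervalIntegral.integral_of_le hb]
    apply setIntegral_congr_fun measurableSet_Ioc
    intro x hx
    dsimp only
    have hx0 : (0:ℝ) ≤ x := le_of_lt hx.1
    have : ∫ t, ({p : ℝ × ℝ | p.2 ≤ p.1}).indicator (fun p => h p.1 * f p.2) (x, t) ∂μ
        = ∫ t, (Iic x).indicator (fun t => f t * h x) t ∂μ := by
      apply MeasureTheory.integral_congr_ae; filter_upwards with t
      by_cases ht : t ≤ x <;>
        simp [Set.indicator_apply, ht, mul_comm]
    rw [this, MeasureTheory.integral_indicator measurableSet_Iic]
    rw [hμ, Measure.restrict_restrict measurableSet_Iic]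
    have hset : Iic x ∩ Ioc 0 b = Ioc 0 x := by
      ext t; simp only [mem_inter_iff, mem_Iic, mem_Ioc]
      constructor
      · rintro ⟨h1, h2, h3⟩; exact ⟨h2, h1⟩
      · rintro ⟨h1, h2⟩; exact ⟨h2, h1, h2.trans hx.2⟩
    rw [hset, MeasureTheory.integral_mul_const, intervalIntegral.integral_of_le hx0]
  -- identify RHS
  have hR : ∫ t, ∫ x, ({p : ℝ × ℝ | p.2 ≤ p.1}).indicator (fun p => h p.1 * f p.2) (x, t) ∂μ ∂μ
      = ∫ t in (0:ℝ)..b, f t * ∫ x in t..b, h x := by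
    rw [intervalIntegral.integral_of_le hb]
    apply setIntegral_congr_fun measurableSet_Ioc
    intro t ht
    dsimp only
    have : ∫ x, ({p : ℝ × ℝ | p.2 ≤ p.1}).indicator (fun p => h p.1 * f p.2) (x, t) ∂μ
        = ∫ x, (Ici t).indicator (fun x => f t * h x) x ∂μ := by
      apply MeasureTheory.integral_congr_ae; filter_upwards with x
      by_cases hx : t ≤ x <;>
        simp [Set.indicator_apply, hx, mul_comm]
    rw [this, MeasureTheory.integral_indicator measurableSet_Ici]
    rw [hμ, Measure.restrict_restrict measurableSet_Ici]
    have hset : Ici t ∩ Ioc 0 b = Ioc 0 b ∩ Ici t := Set.inter_comm _ _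
    rw [hset]
    have hset2 : Ioc (0:ℝ) b ∩ Ici t = Icc t b := by
      ext x; simp only [mem_inter_iff, mem_Ioc, mem_Icc, mem_Ici]
      constructor
      · rintro ⟨⟨h1, h2⟩, h3⟩; exact ⟨h3, h2⟩
      · rintro ⟨h1, h2⟩; exact ⟨⟨lt_of_lt_of_le ht.1 h1, h2⟩, h1⟩
    rw [hset2, MeasureTheory.integral_const_mul, MeasureTheory.integral_Icc_eq_integral_Ioc,
      ← intervalIntegral.integral_of_le ht.2]
  rw [hL, swap, hR]
  have key : ∀ t ∈ Set.uIcc (0:ℝ) b,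
      f t * ∫ x in t..b, h x = f t * ((∫ x in (0:ℝ)..b, h x) - ∫ x in (0:ℝ)..t, h x) := by
    intro t ht
    congr 1
    rw [eq_sub_iff_add_eq, add_comm, intervalIntegral.integral_add_adjacent_intervals]
    · exact hh.mono_set (Set.uIcc_subset_uIcc Set.left_mem_uIcc ht)
    · exact hh.mono_set (Set.uIcc_subset_uIcc ht Set.right_mem_uIcc)
  rw [intervalIntegral.integral_congr key]
  have hfH : IntervalIntegrable (fun t => f t * ∫ x in (0:ℝ)..t, h x) volume 0 b := by
    apply hf.mul_continuousOn
    exact intervalIntegral.continuousOn_primitive_interval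
      (by rwa [Set.uIcc_of_le hb, ← intervalIntegrable_iff_integrableOn_Icc_of_le hb])
  have : (fun t => f t * ((∫ x in (0:ℝ)..b, h x) - ∫ x in (0:ℝ)..t, h x))
      = fun t => f t * (∫ x in (0:ℝ)..b, h x) - f t * (∫ x in (0:ℝ)..t, h x) := by
    funext t; ring
  rw [this, intervalIntegral.integral_sub (hf.mul_const _) hfH,
    intervalIntegral.integral_mul_const]

lemma ibp_const {b : ℝ} (hb : 0 ≤ b) (c : ℂ) {f h : ℝ → ℂ}
    (hf : IntervalIntegrable f volume 0 b) (hh : IntervalIntegrable h volume 0 b) :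
    ∫ x in (0:ℝ)..b, (c + ∫ t in (0:ℝ)..x, f t) * h x
      = (c + ∫ t in (0:ℝ)..b, f t) * (∫ x in (0:ℝ)..b, h x)
        - ∫ t in (0:ℝ)..b, f t * ∫ x in (0:ℝ)..t, h x := by
  have hFh : IntervalIntegrable (fun x => (∫ t in (0:ℝ)..x, f t) * h x) volume 0 b := by
    apply hh.continuousOn_mul
    exact intervalIntegral.continuousOn_primitive_interval
      (by rwa [Set.uIcc_of_le hb, ← intervalIntegrable_iff_integrableOn_Icc_of_le hb])
  have expand : Set.EqOn (fun x => (c + ∫ t in (0:ℝ)..x, f t) * h x)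
      (fun x => c * h x + (∫ t in (0:ℝ)..x, f t) * h x) (Set.uIcc 0 b) := by
    intro x _; simp only; ring
  rw [intervalIntegral.integral_congr expand,
    intervalIntegral.integral_add (hh.const_mul c) hFh, ibp_aux hb hf hh,
    intervalIntegral.integral_const_mul]
  ring

lemma e2_norm (a : ℝ) (n : ℤ) (x : ℝ) : ‖e2 a n x‖ = 1 :=
  Complex.norm_exp_ofReal_mul_I _

lemma e2_continuous (a : ℝ) (n : ℤ) : Continuous (e2 a n) := by
  unfold e2; fun_prop

lemma e2_mul (a : ℝ) (n k : ℤ) (x : ℝ) : e2 a n x * e2 a k x = e2 a (n + k) x := by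
  unfold e2; rw [← Complex.exp_add]; congr 1; push_cast; ring

lemma e2_integral {a : ℝ} (ha : 0 < a) (n : ℤ) (hn : ((n:ℝ)) ≠ 0) (t : ℝ) :
    ∫ x in (0:ℝ)..t, e2 a n x
      = (e2 a n t - 1) / (((2 * Real.pi * (n : ℝ) / a : ℝ) : ℂ) * Complex.I) := by
  have hc : (((2 * Real.pi * (n : ℝ) / a : ℝ) : ℂ) * Complex.I) ≠ 0 := by
    apply mul_ne_zero _ Complex.I_ne_zero
    rw [Ne, Complex.ofReal_eq_zero]
    have hπ := Real.pi_ne_zero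
    positivity
  have hrw : ∀ x : ℝ, e2 a n x
      = Complex.exp ((((2 * Real.pi * (n : ℝ) / a : ℝ) : ℂ) * Complex.I) * (x : ℂ)) := by
    intro x; unfold e2; congr 1; push_cast; ring
  simp_rw [hrw]
  rw [integral_exp_mul_complex hc]
  rw [← hrw t]
  norm_num

set_option maxHeartbeats 1000000 in
theorem statement12 (a : ℝ) (ha : 0 < a) (q : ℝ → ℝ)
    (hq : MeasureTheory.IntegrableOn q (Set.Icc 0 a))
    (hper : ∀ x, q (x + a) = q x)
    (hc0 : fc a q 0 = 0) :
    ∃ C > (0:ℝ), ∀ m : ℕ, 1 ≤ m →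
      ‖∫ x in (0:ℝ)..a, (Gp a q m x - Gp0 a q m)^2 * e2 a (4*(m:ℤ)+4) x‖
        ≤ C * rho a q m / (m : ℝ) := by
  classical
  set M : ℝ := ∫ t in (0:ℝ)..a, |q t| with hMdef
  have haC : (a:ℂ) ≠ 0 := by exact_mod_cast ha.ne'
  have hqa : IntervalIntegrable (fun t => |q t|) volume 0 a := by
    have := (intervalIntegrable_iff_integrableOn_Icc_of_le ha.le).mpr hq.norm
    simpa [Real.norm_eq_abs] using this
  have hM0 : 0 ≤ M := intervalIntegral.integral_nonneg ha.le (fun t _ => abs_nonneg _)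
  refine ⟨52*(M+1)/a + 1, by positivity, ?_⟩
  intro m hm
  have hmR : (1:ℝ) ≤ (m:ℝ) := by exact_mod_cast hm
  have hm0 : (0:ℝ) < (m:ℝ) := lt_of_lt_of_le one_pos hmR
  set kk : ℤ := 4*(m:ℤ)+4 with hkk
  set c : ℂ := fc a q (2*(m:ℤ)+2) with hcdef
  set R : ℝ := rho a q m with hRdef
  have hkkR : ((kk : ℤ) : ℝ) = 4*(m:ℝ)+4 := by rw [hkk]; push_cast; ring
  set w : ℝ := 2*Real.pi*((kk:ℤ):ℝ)/a with hwdef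
  have hw : 0 < w := by
    rw [hwdef, hkkR]; have := Real.pi_pos; positivity
  have hwa1 : 1 ≤ w * a := by
    rw [hwdef, div_mul_cancel₀ _ ha.ne', hkkR]
    nlinarith [Real.pi_gt_three, Nat.cast_nonneg (α := ℝ) m]
  have hmwa : (m:ℝ) ≤ w * a := by
    rw [hwdef, div_mul_cancel₀ _ ha.ne', hkkR]
    nlinarith [Real.pi_gt_three, Nat.cast_nonneg (α := ℝ) m]
  -- the two oscillating integrands
  have hqC : IntervalIntegrable (fun t => ((q t : ℂ))) volume 0 a :=
    (intervalIntegrable_iff_integrableOn_Icc_of_le ha.le).mpr hq.ofReal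
  have hqem : IntervalIntegrable (fun t => (q t : ℂ) * e2 a (-(2*(m:ℤ)+2)) t) volume 0 a :=
    hqC.mul_continuousOn (e2_continuous a _).continuousOn
  have hqep : IntervalIntegrable (fun t => (q t : ℂ) * e2 a (2*(m:ℤ)+2) t) volume 0 a :=
    hqC.mul_continuousOn (e2_continuous a _).continuousOn
  have hsub : ∀ x ∈ Set.Icc (0:ℝ) a, Set.uIcc (0:ℝ) x ⊆ Set.uIcc (0:ℝ) a := by
    intro x hx
    exact Set.uIcc_subset_uIcc Set.left_mem_uIcc (by rw [Set.uIcc_of_le ha.le]; exact hx)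
  -- uniform L¹ bound for oscillatory primitives
  have hprimM : ∀ (j : ℤ), ∀ x ∈ Set.Icc (0:ℝ) a,
      ‖∫ t in (0:ℝ)..x, (q t : ℂ) * e2 a j t‖ ≤ M := by
    intro j x hx
    have h1 : ‖∫ t in (0:ℝ)..x, (q t : ℂ) * e2 a j t‖
        ≤ ∫ t in (0:ℝ)..x, ‖(q t : ℂ) * e2 a j t‖ :=
      intervalIntegral.norm_integral_le_integral_norm hx.1
    have h2 : (∫ t in (0:ℝ)..x, ‖(q t : ℂ) * e2 a j t‖) = ∫ t in (0:ℝ)..x, |q t| := by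
      apply intervalIntegral.integral_congr
      intro t _
      dsimp only
      rw [norm_mul, e2_norm, mul_one, Complex.norm_real, Real.norm_eq_abs]
    have h3 : (∫ t in (0:ℝ)..x, |q t|) ≤ M := by
      rw [hMdef, ← intervalIntegral.integral_add_adjacent_intervals
        (hqa.mono_set (hsub x hx))
        (hqa.mono_set (Set.uIcc_subset_uIcc (by rw [Set.uIcc_of_le ha.le]; exact hx)
          Set.right_mem_uIcc))]
      have : 0 ≤ ∫ t in x..a, |q t| :=
        intervalIntegral.integral_nonneg hx.2 (fun t _ => abs_nonneg _)
      linarith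
    calc ‖∫ t in (0:ℝ)..x, (q t : ℂ) * e2 a j t‖
        ≤ ∫ t in (0:ℝ)..x, ‖(q t : ℂ) * e2 a j t‖ := h1
      _ = ∫ t in (0:ℝ)..x, |q t| := h2
      _ ≤ M := h3
  haveI hne : Nonempty (Set.Icc (0:ℝ) a) := ⟨⟨0, le_rfl, ha.le⟩⟩
  -- rho bounds
  have hsup1 : ∀ x ∈ Set.Icc (0:ℝ) a,
      ‖∫ t in (0:ℝ)..x, (q t : ℂ) * e2 a (-(2*(m:ℤ)+2)) t‖ ≤ R := by
    intro x hx
    have hb : BddAbove (Set.range fun y : Set.Icc (0:ℝ) a =>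
        ‖∫ t in (0:ℝ)..(y:ℝ), (q t : ℂ) * e2 a (-(2*(m:ℤ)+2)) t‖) := by
      refine ⟨M, ?_⟩; rintro v ⟨y, rfl⟩; exact hprimM _ y y.2
    exact le_trans (le_ciSup hb ⟨x, hx⟩) (le_max_left _ _)
  have hsup2 : ∀ x ∈ Set.Icc (0:ℝ) a,
      ‖∫ t in (0:ℝ)..x, (q t : ℂ) * e2 a (2*(m:ℤ)+2) t‖ ≤ R := by
    intro x hx
    have hb : BddAbove (Set.range fun y : Set.Icc (0:ℝ) a =>
        ‖∫ t in (0:ℝ)..(y:ℝ), (q t : ℂ) * e2 a (2*(m:ℤ)+2) t‖) := by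
      refine ⟨M, ?_⟩; rintro v ⟨y, rfl⟩; exact hprimM _ y y.2
    exact le_trans (le_ciSup hb ⟨x, hx⟩) (le_max_right _ _)
  have hRM : R ≤ M := by
    rw [hRdef]; unfold rho
    exact max_le (ciSup_le fun y => hprimM _ y y.2) (ciSup_le fun y => hprimM _ y y.2)
  have hR0 : 0 ≤ R := le_trans (norm_nonneg _) (hsup1 0 ⟨le_rfl, ha.le⟩)
  -- bound on c
  have hcR : ‖c‖ ≤ R / a := by
    rw [hcdef]; unfold fc
    rw [norm_mul]
    have h1 : ‖(1 / (a:ℂ))‖ = 1 / a := by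
      simp [abs_of_pos ha]
    rw [h1]
    have h2 := hsup1 a ⟨ha.le, le_rfl⟩
    calc 1/a * ‖∫ x in (0:ℝ)..a, (q x:ℂ) * e2 a (-(2*(m:ℤ)+2)) x‖
        ≤ 1/a * R := mul_le_mul_of_nonneg_left h2 (by positivity)
      _ = R / a := by ring
  -- the density g of Gp
  set g : ℝ → ℂ := fun t => (1/(a:ℂ)) * ((q t : ℂ) * e2 a (-(2*(m:ℤ)+2)) t) - c/(a:ℂ)
    with hgdef
  have hgint : IntervalIntegrable g volume 0 a :=
    (hqem.const_mul _).sub intervalIntegrable_const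
  have hGpEq : ∀ x ∈ Set.Icc (0:ℝ) a, (∫ t in (0:ℝ)..x, g t) = Gp a q m x := by
    intro x hx
    rw [hgdef]
    rw [intervalIntegral.integral_sub ((hqem.mono_set (hsub x hx)).const_mul _)
      intervalIntegrable_const]
    rw [intervalIntegral.integral_const_mul, intervalIntegral.integral_const]
    unfold Gp
    rw [sub_zero, Complex.real_smul]
    rw [← hcdef]
    ring
  have hGpB : ∀ x ∈ Set.Icc (0:ℝ) a, ‖Gp a q m x‖ ≤ 2*R/a := by
    intro x hx
    unfold Gp
    rw [← hcdef]
    have h1 : ‖(1/(a:ℂ)) * (∫ t in (0:ℝ)..x, (q t:ℂ) * e2 a (-(2*(m:ℤ)+2)) t)‖ ≤ R/a := by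
      rw [norm_mul]
      have : ‖(1/(a:ℂ))‖ = 1/a := by simp [abs_of_pos ha]
      rw [this]
      calc 1/a * ‖∫ t in (0:ℝ)..x, (q t:ℂ) * e2 a (-(2*(m:ℤ)+2)) t‖ ≤ 1/a * R :=
            mul_le_mul_of_nonneg_left (hsup1 x hx) (by positivity)
        _ = R/a := by ring
    have h2 : ‖(c/(a:ℂ)) * (x:ℂ)‖ ≤ R/a := by
      rw [norm_mul, norm_div]
      have ha' : ‖(a:ℂ)‖ = a := by simp [abs_of_pos ha]
      have hx' : ‖(x:ℂ)‖ = x := by simp [abs_of_nonneg hx.1]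
      rw [ha', hx']
      calc ‖c‖/a * x ≤ (R/a)/a * a := by
            apply mul_le_mul _ hx.2 hx.1 (by positivity)
            gcongr
        _ = R/a := by field_simp <;> ring
    calc ‖(1/(a:ℂ)) * (∫ t in (0:ℝ)..x, (q t:ℂ) * e2 a (-(2*(m:ℤ)+2)) t) - (c/(a:ℂ)) * (x:ℂ)‖
        ≤ ‖(1/(a:ℂ)) * (∫ t in (0:ℝ)..x, (q t:ℂ) * e2 a (-(2*(m:ℤ)+2)) t)‖
          + ‖(c/(a:ℂ)) * (x:ℂ)‖ := norm_sub_le _ _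
      _ ≤ R/a + R/a := add_le_add h1 h2
      _ = 2*R/a := by ring
  have hGp0B : ‖Gp0 a q m‖ ≤ 2*R/a := by
    unfold Gp0
    rw [norm_mul]
    have h1 : ‖(1/(a:ℂ))‖ = 1/a := by simp [abs_of_pos ha]
    rw [h1]
    have h2 : ‖∫ x in (0:ℝ)..a, Gp a q m x‖ ≤ 2*R/a * |a - 0| := by
      apply intervalIntegral.norm_integral_le_of_norm_le_const
      intro x hx
      rw [Set.uIoc_of_le ha.le] at hx
      exact hGpB x ⟨hx.1.le, hx.2⟩
    calc 1/a * ‖∫ x in (0:ℝ)..a, Gp a q m x‖ ≤ 1/a * (2*R/a * |a - 0|) := by gcongr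
      _ = 2*R/a := by rw [sub_zero, abs_of_pos ha]; field_simp
  have hGpa : Gp a q m a = 0 := by
    unfold Gp
    rw [← hcdef, div_mul_cancel₀ _ haC]
    unfold fc at hcdef
    rw [hcdef]
    ring
  -- the kernel K and its properties
  set K : ℝ → ℂ := fun t => ∫ x in (0:ℝ)..t, e2 a kk x with hKdef
  have hkkne : ((kk:ℤ):ℝ) ≠ 0 := by rw [hkkR]; positivity
  set d : ℂ := 1 / (((w : ℝ) : ℂ) * Complex.I) with hddef
  have hKformula : ∀ t : ℝ, K t = (e2 a kk t - 1) * d := by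
    intro t
    show (∫ x in (0:ℝ)..t, e2 a kk x) = (e2 a kk t - 1) * d
    rw [hddef]
    rw [e2_integral ha kk hkkne t]
    rw [hwdef]
    field_simp
  have hdnorm : ‖d‖ = 1/w := by
    rw [hddef]
    rw [norm_div, norm_mul, Complex.norm_I, norm_one]
    simp [abs_of_pos hw]
  have hKB : ∀ t : ℝ, ‖K t‖ ≤ 2/w := by
    intro t
    rw [hKformula t, norm_mul, hdnorm]
    have : ‖e2 a kk t - 1‖ ≤ 2 := by
      calc ‖e2 a kk t - 1‖ ≤ ‖e2 a kk t‖ + ‖(1:ℂ)‖ := norm_sub_le _ _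
        _ = 2 := by rw [e2_norm, norm_one]; norm_num
    calc ‖e2 a kk t - 1‖ * (1/w) ≤ 2 * (1/w) := by gcongr
      _ = 2/w := by ring
  -- inner integral: g times e2 kk
  have hgE : ∀ t ∈ Set.Icc (0:ℝ) a,
      (∫ s in (0:ℝ)..t, g s * e2 a kk s)
        = (1/(a:ℂ)) * (∫ s in (0:ℝ)..t, (q s : ℂ) * e2 a (2*(m:ℤ)+2) s) - (c/(a:ℂ)) * K t := by
    intro t ht
    have hpt : ∀ s : ℝ, g s * e2 a kk s
        = (1/(a:ℂ)) * ((q s : ℂ) * e2 a (2*(m:ℤ)+2) s) - (c/(a:ℂ)) * e2 a kk s := by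
      intro s
      rw [hgdef]
      have : (q s : ℂ) * e2 a (-(2*(m:ℤ)+2)) s * e2 a kk s
          = (q s : ℂ) * e2 a (2*(m:ℤ)+2) s := by
        rw [mul_assoc, e2_mul]
        congr 2
        rw [hkk]; ring
      calc ((1/(a:ℂ)) * ((q s : ℂ) * e2 a (-(2*(m:ℤ)+2)) s) - c/(a:ℂ)) * e2 a kk s
          = (1/(a:ℂ)) * ((q s : ℂ) * e2 a (-(2*(m:ℤ)+2)) s * e2 a kk s)
            - (c/(a:ℂ)) * e2 a kk s := by ring
        _ = (1/(a:ℂ)) * ((q s : ℂ) * e2 a (2*(m:ℤ)+2) s) - (c/(a:ℂ)) * e2 a kk s := by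
            rw [this]
    simp_rw [hpt]
    rw [intervalIntegral.integral_sub
      ((hqep.mono_set (hsub t ht)).const_mul _)
      (((e2_continuous a kk).intervalIntegrable _ _).const_mul _)]
    rw [intervalIntegral.integral_const_mul, intervalIntegral.integral_const_mul, hKdef]
  have hgEB : ∀ t ∈ Set.Icc (0:ℝ) a, ‖∫ s in (0:ℝ)..t, g s * e2 a kk s‖ ≤ 3*R/a := by
    intro t ht
    rw [hgE t ht]
    have h1 : ‖(1/(a:ℂ)) * (∫ s in (0:ℝ)..t, (q s : ℂ) * e2 a (2*(m:ℤ)+2) s)‖ ≤ R/a := by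
      rw [norm_mul]
      have : ‖(1/(a:ℂ))‖ = 1/a := by simp [abs_of_pos ha]
      rw [this]
      calc 1/a * ‖∫ s in (0:ℝ)..t, (q s : ℂ) * e2 a (2*(m:ℤ)+2) s‖ ≤ 1/a * R :=
            mul_le_mul_of_nonneg_left (hsup2 t ht) (by positivity)
        _ = R/a := by ring
    have h2 : ‖(c/(a:ℂ)) * K t‖ ≤ 2*R/a := by
      rw [norm_mul, norm_div]
      have ha' : ‖(a:ℂ)‖ = a := by simp [abs_of_pos ha]
      rw [ha']
      calc ‖c‖/a * ‖K t‖ ≤ (R/a)/a * (2/w) := by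
            apply mul_le_mul _ (hKB t) (norm_nonneg _) (by positivity)
            gcongr
        _ = (2*R/a) * (1/(a*w)) := by field_simp <;> ring
        _ ≤ (2*R/a) * 1 := by
            apply mul_le_mul_of_nonneg_left _ (by positivity)
            rw [div_le_one (by positivity)]; linarith [hwa1]
        _ = 2*R/a := by ring
    calc ‖(1/(a:ℂ)) * (∫ s in (0:ℝ)..t, (q s : ℂ) * e2 a (2*(m:ℤ)+2) s) - (c/(a:ℂ)) * K t‖
        ≤ _ + _ := norm_sub_le _ _
      _ ≤ R/a + 2*R/a := add_le_add h1 h2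
      _ = 3*R/a := by ring
  -- the function J
  have hGpcont : ContinuousOn (fun x => Gp a q m x) (Set.Icc 0 a) := by
    have h1 : ContinuousOn (fun x => (1/(a:ℂ)) *
        ∫ t in (0:ℝ)..x, (q t:ℂ) * e2 a (-(2*(m:ℤ)+2)) t) (Set.Icc 0 a) := by
      apply ContinuousOn.mul continuousOn_const
      have := intervalIntegral.continuousOn_primitive_interval
        (f := fun t => (q t:ℂ) * e2 a (-(2*(m:ℤ)+2)) t) (μ := volume) (a := (0:ℝ)) (b := a)
        (by rw [Set.uIcc_of_le ha.le]
            exact (intervalIntegrable_iff_integrableOn_Icc_of_le ha.le).mp hqem)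
      rwa [Set.uIcc_of_le ha.le] at this
    have h2 : ContinuousOn (fun x : ℝ => (fc a q (2*(m:ℤ)+2)/(a:ℂ)) * (x:ℂ)) (Set.Icc 0 a) :=
      ContinuousOn.mul continuousOn_const (Complex.continuous_ofReal.continuousOn)
    exact h1.sub h2
  have hhint : IntervalIntegrable (fun x => (Gp a q m x - Gp0 a q m) * e2 a kk x) volume 0 a := by
    apply ContinuousOn.intervalIntegrable
    rw [Set.uIcc_of_le ha.le]
    exact ((hGpcont.sub continuousOn_const).mul (e2_continuous a kk).continuousOn)
  set J : ℝ → ℂ := fun t => ∫ x in (0:ℝ)..t, (Gp a q m x - Gp0 a q m) * e2 a kk x with hJdef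
  have hJeq : ∀ t ∈ Set.Icc (0:ℝ) a,
      J t = (-Gp0 a q m + Gp a q m t) * K t - ∫ s in (0:ℝ)..t, g s * K s := by
    intro t ht
    have hcongr : Set.EqOn (fun x => (Gp a q m x - Gp0 a q m) * e2 a kk x)
        (fun x => (-Gp0 a q m + ∫ s in (0:ℝ)..x, g s) * e2 a kk x) (Set.uIcc 0 t) := by
      intro x hx
      rw [Set.uIcc_of_le ht.1] at hx
      have hx' : x ∈ Set.Icc (0:ℝ) a := ⟨hx.1, hx.2.trans ht.2⟩
      simp only
      rw [hGpEq x hx']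
      ring
    rw [hJdef]
    simp only
    rw [intervalIntegral.integral_congr hcongr]
    rw [ibp_const ht.1 (-Gp0 a q m)
      (hgint.mono_set (hsub t ht)) ((e2_continuous a kk).intervalIntegrable _ _)]
    rw [hGpEq t ht]
  have hgKB : ∀ t ∈ Set.Icc (0:ℝ) a, ‖∫ s in (0:ℝ)..t, g s * K s‖ ≤ 5*R/(a*w) := by
    intro t ht
    have hptw : ∀ s : ℝ, g s * K s = (g s * e2 a kk s - g s) * d := by
      intro s
      rw [hKformula s]; ring
    simp_rw [hptw]
    rw [intervalIntegral.integral_mul_const]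
    have hsplit : (∫ s in (0:ℝ)..t, (g s * e2 a kk s - g s))
        = (∫ s in (0:ℝ)..t, g s * e2 a kk s) - ∫ s in (0:ℝ)..t, g s :=
      intervalIntegral.integral_sub
        ((hgint.mono_set (hsub t ht)).mul_continuousOn (e2_continuous a kk).continuousOn)
        (hgint.mono_set (hsub t ht))
    rw [hsplit, norm_mul, hdnorm]
    have h1 : ‖(∫ s in (0:ℝ)..t, g s * e2 a kk s) - ∫ s in (0:ℝ)..t, g s‖ ≤ 5*R/a := by
      calc ‖(∫ s in (0:ℝ)..t, g s * e2 a kk s) - ∫ s in (0:ℝ)..t, g s‖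
          ≤ ‖∫ s in (0:ℝ)..t, g s * e2 a kk s‖ + ‖∫ s in (0:ℝ)..t, g s‖ := norm_sub_le _ _
        _ ≤ 3*R/a + 2*R/a := by
            apply add_le_add (hgEB t ht)
            rw [hGpEq t ht]
            exact hGpB t ht
        _ = 5*R/a := by ring
    calc ‖(∫ s in (0:ℝ)..t, g s * e2 a kk s) - ∫ s in (0:ℝ)..t, g s‖ * (1/w)
        ≤ (5*R/a) * (1/w) := by gcongr
      _ = 5*R/(a*w) := by field_simp <;> ring
  have hJB : ∀ t ∈ Set.Icc (0:ℝ) a, ‖J t‖ ≤ 13*R/(a*w) := by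
    intro t ht
    rw [hJeq t ht]
    have h1 : ‖(-Gp0 a q m + Gp a q m t) * K t‖ ≤ (4*R/a) * (2/w) := by
      rw [norm_mul]
      apply mul_le_mul _ (hKB t) (norm_nonneg _) (by positivity)
      calc ‖-Gp0 a q m + Gp a q m t‖ ≤ ‖Gp0 a q m‖ + ‖Gp a q m t‖ := by
            rw [neg_add_eq_sub]
            exact (norm_sub_le _ _).trans (by rw [add_comm])
        _ ≤ 2*R/a + 2*R/a := add_le_add hGp0B (hGpB t ht)
        _ = 4*R/a := by ring
    calc ‖(-Gp0 a q m + Gp a q m t) * K t - ∫ s in (0:ℝ)..t, g s * K s‖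
        ≤ ‖(-Gp0 a q m + Gp a q m t) * K t‖ + ‖∫ s in (0:ℝ)..t, g s * K s‖ := norm_sub_le _ _
      _ ≤ (4*R/a) * (2/w) + 5*R/(a*w) := add_le_add h1 (hgKB t ht)
      _ = 13*R/(a*w) := by field_simp <;> ring
  -- main identity
  have hmain : (∫ x in (0:ℝ)..a, (Gp a q m x - Gp0 a q m)^2 * e2 a (4*(m:ℤ)+4) x)
      = -Gp0 a q m * J a - ∫ t in (0:ℝ)..a, g t * J t := by
    have hcongr : Set.EqOn (fun x => (Gp a q m x - Gp0 a q m)^2 * e2 a (4*(m:ℤ)+4) x)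
        (fun x => (-Gp0 a q m + ∫ s in (0:ℝ)..x, g s)
          * ((Gp a q m x - Gp0 a q m) * e2 a kk x)) (Set.uIcc 0 a) := by
      intro x hx
      rw [Set.uIcc_of_le ha.le] at hx
      simp only
      rw [hGpEq x hx, ← hkk]
      ring
    rw [intervalIntegral.integral_congr hcongr]
    rw [ibp_const ha.le (-Gp0 a q m) hgint hhint]
    rw [hGpEq a ⟨ha.le, le_rfl⟩, hGpa, add_zero]
  -- integrability and bound for ∫ g J
  have hJcont : ContinuousOn J (Set.uIcc 0 a) :=
    intervalIntegral.continuousOn_primitive_interval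
      (by rw [Set.uIcc_of_le ha.le]
          exact (intervalIntegrable_iff_integrableOn_Icc_of_le ha.le).mp hhint)
  have hgJint : IntervalIntegrable (fun t => g t * J t) volume 0 a :=
    hgint.mul_continuousOn hJcont
  have hgnormB : (∫ t in (0:ℝ)..a, ‖g t‖) ≤ M/a + R/a := by
    have hmaj : ∀ t ∈ Set.Icc (0:ℝ) a, ‖g t‖ ≤ (1/a) * |q t| + R/a^2 := by
      intro t _
      rw [hgdef]
      simp only
      calc ‖(1/(a:ℂ)) * ((q t : ℂ) * e2 a (-(2*(m:ℤ)+2)) t) - c/(a:ℂ)‖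
          ≤ ‖(1/(a:ℂ)) * ((q t : ℂ) * e2 a (-(2*(m:ℤ)+2)) t)‖ + ‖c/(a:ℂ)‖ := norm_sub_le _ _
        _ ≤ (1/a) * |q t| + R/a^2 := by
            apply add_le_add
            · rw [norm_mul, norm_mul, e2_norm, mul_one]
              simp only [Complex.norm_real, Real.norm_eq_abs]
              have : ‖(1/(a:ℂ))‖ = 1/a := by simp [abs_of_pos ha]
              rw [this]
            · rw [norm_div]
              have ha' : ‖(a:ℂ)‖ = a := by simp [abs_of_pos ha]
              rw [ha']
              calc ‖c‖/a ≤ (R/a)/a := by gcongr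
                _ = R/a^2 := by ring
    calc (∫ t in (0:ℝ)..a, ‖g t‖) ≤ ∫ t in (0:ℝ)..a, ((1/a) * |q t| + R/a^2) := by
          apply intervalIntegral.integral_mono_on ha.le hgint.norm
            ((hqa.const_mul _).add intervalIntegrable_const) hmaj
      _ = (1/a) * M + (R/a^2) * a := by
          rw [intervalIntegral.integral_add (hqa.const_mul _) intervalIntegrable_const]
          rw [intervalIntegral.integral_const_mul, intervalIntegral.integral_const]
          rw [hMdef, sub_zero, smul_eq_mul]
          ring
      _ = M/a + R/a := by field_simp <;> ring
  have hgJB : ‖∫ t in (0:ℝ)..a, g t * J t‖ ≤ (M/a + R/a) * (13*R/(a*w)) := by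
    have h1 : ‖∫ t in (0:ℝ)..a, g t * J t‖ ≤ ∫ t in (0:ℝ)..a, ‖g t * J t‖ :=
      intervalIntegral.norm_integral_le_integral_norm ha.le
    have h2 : (∫ t in (0:ℝ)..a, ‖g t * J t‖) ≤ ∫ t in (0:ℝ)..a, ‖g t‖ * (13*R/(a*w)) := by
      apply intervalIntegral.integral_mono_on ha.le hgJint.norm
        (hgint.norm.mul_const _)
      intro t ht
      rw [norm_mul]
      gcongr
      exact hJB t ht
    have h3 : (∫ t in (0:ℝ)..a, ‖g t‖ * (13*R/(a*w)))
        = (∫ t in (0:ℝ)..a, ‖g t‖) * (13*R/(a*w)) :=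
      intervalIntegral.integral_mul_const _ _
    calc ‖∫ t in (0:ℝ)..a, g t * J t‖ ≤ (∫ t in (0:ℝ)..a, ‖g t‖) * (13*R/(a*w)) := by
          rw [← h3]; exact h1.trans h2
      _ ≤ (M/a + R/a) * (13*R/(a*w)) := by
          apply mul_le_mul_of_nonneg_right hgnormB (by positivity)
  -- final estimate
  rw [hmain]
  have hfinal : ‖-Gp0 a q m * J a - ∫ t in (0:ℝ)..a, g t * J t‖
      ≤ (2*R/a) * (13*R/(a*w)) + (M/a + R/a) * (13*R/(a*w)) := by
    calc ‖-Gp0 a q m * J a - ∫ t in (0:ℝ)..a, g t * J t‖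
        ≤ ‖-Gp0 a q m * J a‖ + ‖∫ t in (0:ℝ)..a, g t * J t‖ := norm_sub_le _ _
      _ ≤ (2*R/a) * (13*R/(a*w)) + (M/a + R/a) * (13*R/(a*w)) := by
          apply add_le_add _ hgJB
          rw [norm_mul, norm_neg]
          apply mul_le_mul hGp0B (hJB a ⟨ha.le, le_rfl⟩) (norm_nonneg _) (by positivity)
  refine hfinal.trans ?_
  have hstep1 : (2*R/a) * (13*R/(a*w)) + (M/a + R/a) * (13*R/(a*w))
      ≤ (4*M/a) * (13*R/(a*w)) := by
    have : (2*R/a) + (M/a + R/a) ≤ 4*M/a := by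
      have : 2*R + (M + R) ≤ 4*M := by linarith [hRM]
      calc (2*R/a) + (M/a + R/a) = (2*R + (M + R))/a := by ring
        _ ≤ 4*M/a := by gcongr
    calc (2*R/a) * (13*R/(a*w)) + (M/a + R/a) * (13*R/(a*w))
        = ((2*R/a) + (M/a + R/a)) * (13*R/(a*w)) := by ring
      _ ≤ (4*M/a) * (13*R/(a*w)) := by
          apply mul_le_mul_of_nonneg_right this (by positivity)
  refine hstep1.trans ?_
  have hstep2 : (4*M/a) * (13*R/(a*w)) = 52*M*R/(a*(a*w)) := by field_simp <;> ring
  rw [hstep2]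
  have hstep3 : 52*M*R/(a*(a*w)) ≤ 52*M*R/(a*(m:ℝ)) := by
    rw [div_le_div_iff₀ (by positivity) (by positivity)]
    have h52 : (0:ℝ) ≤ 52*M*R*a := by positivity
    have h2 := mul_le_mul_of_nonneg_left hmwa h52
    calc 52*M*R*(a*(m:ℝ)) = 52*M*R*a*(m:ℝ) := by ring
      _ ≤ 52*M*R*a*(w*a) := h2
      _ = 52*M*R*(a*(a*w)) := by ring
  refine hstep3.trans ?_
  have : 52*M*R/(a*(m:ℝ)) = (52*M/a)*R/(m:ℝ) := by ring
  rw [this]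
  have hC : 52*M/a ≤ 52*(M+1)/a + 1 := by
    have h' : 52*M/a ≤ 52*(M+1)/a := by gcongr; linarith
    linarith
  have h1 : (52*M/a)*R ≤ (52*(M+1)/a + 1)*R := mul_le_mul_of_nonneg_right hC hR0
  exact (div_le_div_iff_of_pos_right hm0).mpr h1
end
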